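/- arXiv:2408.05634 — 2 statements merged into one kernel-verified Lean document; each statement's English description precedes it below -/
import Mathlib

section
/- For any n×n complex matrix G and any real vector u ∈ ℝⁿ majorized by the vector of squared singular values of G, there exists an n×n unitary matrix U such that the diagonal entries of U*G*GU equal u. -/
open Matrix

noncomputable def sortDesc {n : ℕ} (x : Fin n → ℝ) : Fin n → ℝ :=
  fun i => x (Tuple.sort x i.rev)

noncomputable def psum {n : ℕ} (x : Fin n → ℝ) (k : ℕ) : ℝ :=
  ∑ i ∈ Finset.univ.filter (fun i : Fin n => (i : ℕ) < k), sortDesc x i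

def Majorizes {n : ℕ} (x y : Fin n → ℝ) : Prop :=
  (∀ k : ℕ, psum x k ≤ psum y k) ∧ ∑ i, x i = ∑ i, y i

def WeakMajorizes {n : ℕ} (x y : Fin n → ℝ) : Prop :=
  ∀ k : ℕ, psum x k ≤ psum y k

noncomputable def sqSingular {n : ℕ} (G : Matrix (Fin n) (Fin n) ℂ) : Fin n → ℝ :=
  (Matrix.isHermitian_conjTranspose_mul_self G).eigenvalues

noncomputable def singular {n : ℕ} (G : Matrix (Fin n) (Fin n) ℂ) : Fin n → ℝ :=
  fun i => Real.sqrt (sqSingular G i)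


lemma sortDesc_comp_perm {n : ℕ} (x : Fin n → ℝ) (σ : Equiv.Perm (Fin n)) :
    sortDesc (x ∘ σ) = sortDesc x := by
  funext i
  have h := Tuple.comp_perm_comp_sort_eq_comp_sort (f := x) (σ := σ)
  calc sortDesc (x ∘ σ) i = ((x ∘ σ) ∘ Tuple.sort (x ∘ σ)) i.rev := rfl
    _ = (x ∘ Tuple.sort x) i.rev := by rw [h]
    _ = sortDesc x i := rfl

lemma sortDesc_of_antitone {n : ℕ} {x : Fin n → ℝ} (hx : Antitone x) :
    sortDesc x = x := by
  have hmono : Monotone (x ∘ (Fin.revPerm : Equiv.Perm (Fin n))) := by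
    intro a b hab
    exact hx (by simpa using Fin.rev_le_rev.mpr hab)
  have h1 : (x ∘ (Fin.revPerm : Equiv.Perm (Fin n))) ∘
      Tuple.sort (x ∘ (Fin.revPerm : Equiv.Perm (Fin n))) = x ∘ Tuple.sort x :=
    Tuple.comp_perm_comp_sort_eq_comp_sort
  rw [Tuple.sort_eq_refl_iff_monotone.mpr hmono] at h1
  funext i
  have := congrFun h1 i.rev
  simpa [sortDesc] using this.symm

lemma antitone_sortDesc {n : ℕ} (x : Fin n → ℝ) : Antitone (sortDesc x) := by
  intro a b hab
  exact Tuple.monotone_sort x (Fin.rev_le_rev.mpr hab)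

lemma exists_sortDesc_perm {n : ℕ} (x : Fin n → ℝ) :
    ∃ σ : Equiv.Perm (Fin n), x ∘ σ = sortDesc x :=
  ⟨(Fin.revPerm : Equiv.Perm (Fin n)).trans (Tuple.sort x), rfl⟩

lemma psum_comp_perm {n : ℕ} (x : Fin n → ℝ) (σ : Equiv.Perm (Fin n)) (k : ℕ) :
    psum (x ∘ σ) k = psum x k := by
  unfold psum; rw [sortDesc_comp_perm]

lemma majorizes_comp_perm {n : ℕ} {u d : Fin n → ℝ} (h : Majorizes u d)
    (σ τ : Equiv.Perm (Fin n)) : Majorizes (u ∘ σ) (d ∘ τ) := by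
  refine ⟨fun k => ?_, ?_⟩
  · rw [psum_comp_perm, psum_comp_perm]; exact h.1 k
  · simpa [Function.comp, Equiv.sum_comp σ u, Equiv.sum_comp τ d] using h.2

lemma psum_of_antitone {n : ℕ} {x : Fin n → ℝ} (hx : Antitone x) (k : ℕ) :
    psum x k = ∑ i ∈ Finset.univ.filter (fun i : Fin n => (i : ℕ) < k), x i := by
  unfold psum; rw [sortDesc_of_antitone hx]


def rotM (i j : Fin n) (c s : ℝ) : Matrix (Fin n) (Fin n) ℂ := fun k l =>
  if k = i then (if l = i then (c : ℂ) else if l = j then (-s : ℝ) else 0)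
  else if k = j then (if l = i then (s : ℂ) else if l = j then (c : ℂ) else 0)
  else if k = l then 1 else 0

section rot
variable {i j : Fin n} (hij : i ≠ j) (c s : ℝ)
include hij

lemma rotM_col_i : ∀ l, rotM i j c s l i =
    (if l = i then (c : ℂ) else 0) + (if l = j then (s : ℂ) else 0) := by
  intro l
  by_cases h1 : l = i
  · subst h1; simp [rotM, hij, Ne.symm hij]
  · by_cases h2 : l = j
    · subst h2; simp [rotM, hij, Ne.symm hij, h1]
    · simp [rotM, h1, h2, Ne.symm h1]

lemma rotM_col_j : ∀ l, rotM i j c s l j =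
    (if l = i then (-s : ℂ) else 0) + (if l = j then (c : ℂ) else 0) := by
  intro l
  by_cases h1 : l = i
  · subst h1; simp [rotM, hij, Ne.symm hij]
  · by_cases h2 : l = j
    · subst h2; simp [rotM, hij, Ne.symm hij, h1]
    · simp [rotM, h1, h2, Ne.symm h2]

omit hij in
lemma rotM_col_other {b : Fin n} (hbi : b ≠ i) (hbj : b ≠ j) :
    ∀ l, rotM i j c s l b = if l = b then 1 else 0 := by
  intro l
  by_cases h1 : l = i
  · subst h1; simp [rotM, Ne.symm hbi, hbi, hbj]
  · by_cases h2 : l = j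
    · subst h2; simp [rotM, Ne.symm hbj, h1, hbi, hbj]
    · simp [rotM, h1, h2]

lemma mul_rotM_i (M : Matrix (Fin n) (Fin n) ℂ) (k : Fin n) :
    (M * rotM i j c s) k i = M k i * c + M k j * s := by
  simp only [Matrix.mul_apply, rotM_col_i hij c s, mul_add, mul_ite, mul_zero,
    Finset.sum_add_distrib, Finset.sum_ite_eq', Finset.mem_univ, if_true]

lemma mul_rotM_j (M : Matrix (Fin n) (Fin n) ℂ) (k : Fin n) :
    (M * rotM i j c s) k j = M k i * ((-s : ℝ) : ℂ) + M k j * c := by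
  simp only [Matrix.mul_apply, rotM_col_j hij c s, mul_add, mul_ite, mul_zero,
    Finset.sum_add_distrib, Finset.sum_ite_eq', Finset.mem_univ, if_true]
  push_cast; ring

omit hij in
lemma mul_rotM_other (M : Matrix (Fin n) (Fin n) ℂ) {b : Fin n} (hbi : b ≠ i) (hbj : b ≠ j)
    (k : Fin n) : (M * rotM i j c s) k b = M k b := by
  simp only [Matrix.mul_apply, rotM_col_other c s hbi hbj, mul_ite, mul_one, mul_zero,
    Finset.sum_ite_eq', Finset.mem_univ, if_true]

lemma rotMH_mul_i (M : Matrix (Fin n) (Fin n) ℂ) (l : Fin n) :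
    ((rotM i j c s)ᴴ * M) i l = (c : ℂ) * M i l + (s : ℂ) * M j l := by
  have key : ∀ x, star (rotM i j c s x i)
      = (if x = i then (c : ℂ) else 0) + (if x = j then (s : ℂ) else 0) := by
    intro x
    simp [rotM_col_i hij, apply_ite (star : ℂ → ℂ), Complex.star_def, Complex.conj_ofReal]
  simp only [Matrix.mul_apply, Matrix.conjTranspose_apply, key, add_mul, ite_mul, zero_mul,
    Finset.sum_add_distrib, Finset.sum_ite_eq, Finset.mem_univ, if_true,
    Finset.sum_ite_eq', Finset.mem_univ, if_true]

lemma rotMH_mul_j (M : Matrix (Fin n) (Fin n) ℂ) (l : Fin n) :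
    ((rotM i j c s)ᴴ * M) j l = ((-s : ℝ) : ℂ) * M i l + (c : ℂ) * M j l := by
  have key : ∀ x, star (rotM i j c s x j)
      = (if x = i then ((-s : ℝ) : ℂ) else 0) + (if x = j then (c : ℂ) else 0) := by
    intro x
    simp [rotM_col_j hij, apply_ite (star : ℂ → ℂ), Complex.star_def, Complex.conj_ofReal]
  simp only [Matrix.mul_apply, Matrix.conjTranspose_apply, key, add_mul, ite_mul, zero_mul,
    Finset.sum_add_distrib, Finset.sum_ite_eq', Finset.mem_univ, if_true]

omit hij in
lemma rotMH_mul_other (M : Matrix (Fin n) (Fin n) ℂ) {a : Fin n} (hai : a ≠ i) (haj : a ≠ j)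
    (l : Fin n) : ((rotM i j c s)ᴴ * M) a l = M a l := by
  have key : ∀ x, star (rotM i j c s x a) = (if x = a then (1 : ℂ) else 0) := by
    intro x
    simp [rotM_col_other c s hai haj, apply_ite (star : ℂ → ℂ)]
  simp only [Matrix.mul_apply, Matrix.conjTranspose_apply, key, ite_mul, zero_mul, one_mul,
    Finset.sum_ite_eq', Finset.mem_univ, if_true]

omit hij in
lemma rotM_apply_ii : rotM i j c s i i = (c : ℂ) := by simp [rotM]
lemma rotM_apply_ij : rotM i j c s i j = ((-s : ℝ) : ℂ) := by simp [rotM, Ne.symm hij]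
lemma rotM_apply_ji : rotM i j c s j i = (s : ℂ) := by simp [rotM, hij, Ne.symm hij]
lemma rotM_apply_jj : rotM i j c s j j = (c : ℂ) := by simp [rotM, hij, Ne.symm hij]
omit hij in
lemma rotM_apply_row_other {a : Fin n} (hai : a ≠ i) (haj : a ≠ j) (b : Fin n) :
    rotM i j c s a b = if a = b then 1 else 0 := by simp [rotM, hai, haj]
omit hij in
lemma rotM_apply_i_other {b : Fin n} (hbi : b ≠ i) (hbj : b ≠ j) :
    rotM i j c s i b = 0 := by simp [rotM, hbi, hbj]
omit hij in
lemma rotM_apply_j_other {b : Fin n} (hbi : b ≠ i) (hbj : b ≠ j) :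
    rotM i j c s j b = 0 := by
  by_cases h : j = i
  · subst h; simp [rotM, hbi, hbj]
  · simp [rotM, h, hbi, hbj]

lemma rotM_unitary (hcs : c ^ 2 + s ^ 2 = 1) :
    rotM i j c s ∈ Matrix.unitaryGroup (Fin n) ℂ := by
  have hcs' : (c : ℂ) ^ 2 + (s : ℂ) ^ 2 = 1 := by exact_mod_cast congrArg (Complex.ofReal) hcs
  rw [Matrix.mem_unitaryGroup_iff']
  rw [Matrix.star_eq_conjTranspose]
  ext a b
  by_cases hai : a = i
  · subst hai
    rw [rotMH_mul_i hij]
    by_cases hbi : b = a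
    · subst hbi
      rw [rotM_apply_ii, rotM_apply_ji hij, Matrix.one_apply_eq]
      linear_combination hcs'
    · by_cases hbj : b = j
      · subst hbj
        rw [rotM_apply_ij hij, rotM_apply_jj hij, Matrix.one_apply_ne (Ne.symm hbi)]
        push_cast; ring
      · rw [rotM_apply_i_other _ _ (fun h => hbi h) hbj,
          rotM_apply_j_other _ _ (fun h => hbi h) hbj,
          Matrix.one_apply_ne (fun h => hbi h.symm)]
        ring
  · by_cases haj : a = j
    · subst haj
      rw [rotMH_mul_j hij]
      by_cases hbi : b = i
      · subst hbi
        rw [rotM_apply_ii, rotM_apply_ji hij, Matrix.one_apply_ne hai]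
        push_cast; ring
      · by_cases hbj : b = a
        · subst hbj
          rw [rotM_apply_ij hij, rotM_apply_jj hij, Matrix.one_apply_eq]
          push_cast; linear_combination hcs'
        · rw [rotM_apply_i_other _ _ hbi (fun h => hbj h),
            rotM_apply_j_other _ _ hbi (fun h => hbj h),
            Matrix.one_apply_ne (fun h => hbj h.symm)]
          ring
    · rw [rotMH_mul_other _ _ _ hai haj]
      rw [rotM_apply_row_other c s hai haj, Matrix.one_apply]
end rot

section ivt

lemma rot_step_cs {n : ℕ} (A : Matrix (Fin n) (Fin n) ℂ) (hA : A.IsHermitian) {i j : Fin n}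
    (hij : i ≠ j) (d : Fin n → ℝ) (hd : ∀ k, A k k = (d k : ℂ)) (c s : ℝ)
    (hcs : c ^ 2 + s ^ 2 = 1) :
    ∃ R ∈ Matrix.unitaryGroup (Fin n) ℂ,
      (Rᴴ * A * R) i i = ((c ^ 2 * d i + s ^ 2 * d j + c * s * (2 * (A i j).re) : ℝ) : ℂ) ∧
      (Rᴴ * A * R) j j
        = ((d i + d j - (c ^ 2 * d i + s ^ 2 * d j + c * s * (2 * (A i j).re)) : ℝ) : ℂ) ∧
      (∀ k, k ≠ i → k ≠ j → (Rᴴ * A * R) k k = (d k : ℂ)) := by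
  set r : ℝ := 2 * (A i j).re with hr
  have hAij : A i j + A j i = (r : ℂ) := by
    have h1 : A j i = (starRingEnd ℂ) (A i j) := by
      conv_lhs => rw [← hA]
      simp [Matrix.conjTranspose_apply]
    rw [h1, Complex.add_conj]
  have hcs' : (c : ℂ) ^ 2 + (s : ℂ) ^ 2 = 1 := by exact_mod_cast congrArg Complex.ofReal hcs
  refine ⟨rotM i j c s, rotM_unitary hij c s hcs, ?_, ?_, ?_⟩
  · rw [Matrix.mul_assoc, rotMH_mul_i hij, mul_rotM_i hij, mul_rotM_i hij, hd i, hd j]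
    push_cast
    linear_combination (c : ℂ) * (s : ℂ) * hAij
  · rw [Matrix.mul_assoc, rotMH_mul_j hij, mul_rotM_j hij, mul_rotM_j hij, hd i, hd j]
    push_cast
    linear_combination (-(c : ℂ) * (s : ℂ)) * hAij + ((d i : ℂ) + (d j : ℂ)) * hcs'
  · intro k hki hkj
    rw [Matrix.mul_assoc, rotMH_mul_other _ _ _ hki hkj, mul_rotM_other _ _ _ hki hkj]
    exact hd k

/-- One "Robin Hood" rotation step on a Hermitian matrix. -/
lemma rot_step {n : ℕ} (A : Matrix (Fin n) (Fin n) ℂ) (hA : A.IsHermitian) {i j : Fin n}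
    (hij : i ≠ j) (d : Fin n → ℝ) (hd : ∀ k, A k k = (d k : ℂ)) (v : ℝ)
    (hv : v ∈ Set.uIcc (d i) (d j)) :
    ∃ R ∈ Matrix.unitaryGroup (Fin n) ℂ,
      (Rᴴ * A * R) i i = (v : ℂ) ∧ (Rᴴ * A * R) j j = ((d i + d j - v : ℝ) : ℂ) ∧
      (∀ k, k ≠ i → k ≠ j → (Rᴴ * A * R) k k = (d k : ℂ)) := by
  set r : ℝ := 2 * (A i j).re with hr
  set f : ℝ → ℝ := fun θ =>
    Real.cos θ ^ 2 * d i + Real.sin θ ^ 2 * d j + Real.cos θ * Real.sin θ * r with hf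
  have hcont : Continuous f := by
    apply Continuous.add
    apply Continuous.add
    · exact ((Real.continuous_cos.pow 2).mul continuous_const)
    · exact ((Real.continuous_sin.pow 2).mul continuous_const)
    · exact ((Real.continuous_cos.mul Real.continuous_sin).mul continuous_const)
  have hf0 : f 0 = d i := by simp [hf]
  have hfpi : f (Real.pi / 2) = d j := by simp [hf]
  have hsub : Set.uIcc (d i) (d j) ⊆ f '' Set.uIcc 0 (Real.pi / 2) := by
    have := intermediate_value_uIcc (a := 0) (b := Real.pi / 2) hcont.continuousOn
    rwa [hf0, hfpi] at this
  obtain ⟨θ, -, hθ⟩ := hsub hv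
  have hcs : Real.cos θ ^ 2 + Real.sin θ ^ 2 = 1 := by
    rw [add_comm]; exact Real.sin_sq_add_cos_sq θ
  obtain ⟨R, hR, h1, h2, h3⟩ := rot_step_cs A hA hij d hd (Real.cos θ) (Real.sin θ) hcs
  have hvθ : Real.cos θ ^ 2 * d i + Real.sin θ ^ 2 * d j
      + Real.cos θ * Real.sin θ * (2 * (A i j).re) = v := hθ
  rw [hvθ] at h1 h2
  exact ⟨R, hR, h1, h2, h3⟩

end ivt

section permmat
variable {n : ℕ}

def permM (σ : Equiv.Perm (Fin n)) : Matrix (Fin n) (Fin n) ℂ :=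
  fun k l => if k = σ l then 1 else 0

lemma permM_unitary (σ : Equiv.Perm (Fin n)) : permM σ ∈ Matrix.unitaryGroup (Fin n) ℂ := by
  rw [Matrix.mem_unitaryGroup_iff', Matrix.star_eq_conjTranspose]
  ext a b
  simp only [Matrix.mul_apply, Matrix.conjTranspose_apply, permM,
    apply_ite (star : ℂ → ℂ), star_one, star_zero, ite_mul, one_mul, zero_mul,
    Finset.sum_ite_eq', Finset.mem_univ, if_true, Matrix.one_apply]
  by_cases h : a = b
  · subst h; simp
  · simp [h, fun hh : σ a = σ b => h (σ.injective hh)]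

lemma permM_conj (σ : Equiv.Perm (Fin n)) (B : Matrix (Fin n) (Fin n) ℂ) (a b : Fin n) :
    ((permM σ)ᴴ * B * permM σ) a b = B (σ a) (σ b) := by
  have hBP : ∀ k b, (B * permM σ) k b = B k (σ b) := by
    intro k b
    simp only [Matrix.mul_apply, permM, mul_ite, mul_one, mul_zero,
      Finset.sum_ite_eq', Finset.mem_univ, if_true]
  rw [Matrix.mul_assoc]
  simp only [Matrix.mul_apply, Matrix.conjTranspose_apply, permM,
    apply_ite (star : ℂ → ℂ), star_one, star_zero, ite_mul, one_mul, zero_mul,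
    Finset.sum_ite_eq', Finset.mem_univ, if_true, hBP]

end permmat

section mainlemmas
variable {n : ℕ}

lemma sumLt_succ (x : Fin n → ℝ) (j : Fin n) :
    ∑ i ∈ Finset.univ.filter (fun i : Fin n => (i : ℕ) < (j : ℕ) + 1), x i
      = (∑ i ∈ Finset.univ.filter (fun i : Fin n => (i : ℕ) < (j : ℕ)), x i) + x j := by
  have h : Finset.univ.filter (fun i : Fin n => (i : ℕ) < (j : ℕ) + 1)
      = insert j (Finset.univ.filter (fun i : Fin n => (i : ℕ) < (j : ℕ))) := by
    ext i
    simp only [Finset.mem_filter, Finset.mem_univ, true_and, Finset.mem_insert]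
    constructor
    · intro h
      rcases Nat.lt_succ_iff_lt_or_eq.mp h with h | h
      · exact Or.inr h
      · exact Or.inl (Fin.ext h)
    · rintro (rfl | h)
      · omega
      · omega
  rw [h, Finset.sum_insert (by simp)]
  ring

lemma sumLt_split (x : Fin n → ℝ) {a b : ℕ} (hab : a ≤ b) :
    ∑ i ∈ Finset.univ.filter (fun i : Fin n => (i : ℕ) < b), x i
      = (∑ i ∈ Finset.univ.filter (fun i : Fin n => (i : ℕ) < a), x i)
        + ∑ i ∈ Finset.univ.filter (fun i : Fin n => a ≤ (i : ℕ) ∧ (i : ℕ) < b), x i := by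
  have h := Finset.sum_filter_add_sum_filter_not
    (Finset.univ.filter (fun i : Fin n => (i : ℕ) < b)) (fun i : Fin n => (i : ℕ) < a) x
  rw [Finset.filter_filter, Finset.filter_filter] at h
  rw [← h]
  congr 1
  · congr 1; ext i; simp only [Finset.mem_filter, Finset.mem_univ, true_and]; omega
  · congr 1; ext i; simp only [Finset.mem_filter, Finset.mem_univ, true_and]; omega

/-- trivial case: diagonal already equals `u` -/
lemma main_triv (A : Matrix (Fin n) (Fin n) ℂ) (d u : Fin n → ℝ)
    (hdiag : ∀ k, A k k = (d k : ℂ)) (h : ∀ i, u i = d i) :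
    ∃ U ∈ Matrix.unitaryGroup (Fin n) ℂ, ∀ k, (Uᴴ * A * U) k k = (u k : ℂ) := by
  refine ⟨1, one_mem _, fun k => ?_⟩
  simp [hdiag k, h k]

lemma main_ind (m : ℕ) :
    ∀ (A : Matrix (Fin n) (Fin n) ℂ), A.IsHermitian →
    ∀ (d u : Fin n → ℝ), Antitone d → Antitone u → (∀ k, A k k = (d k : ℂ)) →
    Majorizes u d → (Finset.univ.filter fun i => u i ≠ d i).card ≤ m →
    ∃ U ∈ Matrix.unitaryGroup (Fin n) ℂ, ∀ k, (Uᴴ * A * U) k k = (u k : ℂ) := by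
  induction m with
  | zero =>
    intro A hA d u hd hu hdiag hmaj hcard
    refine main_triv A d u hdiag fun i => ?_
    have h0 : (Finset.univ.filter fun i => u i ≠ d i) = ∅ :=
      Finset.card_eq_zero.mp (Nat.le_zero.mp hcard)
    by_contra hne
    have : i ∈ (Finset.univ.filter fun i => u i ≠ d i) := by simp [hne]
    rw [h0] at this
    exact absurd this (Finset.notMem_empty i)
  | succ m ih =>
    intro A hA d u hd hu hdiag hmaj hcard
    by_cases hall : ∀ i, u i = d i
    · exact main_triv A d u hdiag hall
    push_neg at hall
    -- the largest index where u < d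
    have hSne : (Finset.univ.filter fun i => u i < d i).Nonempty := by
      by_contra hS
      rw [Finset.not_nonempty_iff_eq_empty, Finset.filter_eq_empty_iff] at hS
      obtain ⟨i0, hi0⟩ := hall
      have hlt : ∀ i, d i ≤ u i := fun i => not_lt.mp (hS (Finset.mem_univ i))
      have : ∑ i, d i < ∑ i, u i :=
        Finset.sum_lt_sum (fun i _ => hlt i) ⟨i0, Finset.mem_univ i0, lt_of_le_of_ne (hlt i0) (Ne.symm hi0)⟩
      linarith [hmaj.2]
    set S := Finset.univ.filter fun i => u i < d i with hS
    set j := S.max' hSne with hjdef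
    have hj1 : u j < d j := (Finset.mem_filter.mp (S.max'_mem hSne)).2
    have hj2 : ∀ l, j < l → d l ≤ u l := by
      intro l hl
      by_contra hc
      push_neg at hc
      have : l ∈ S := by rw [hS]; exact Finset.mem_filter.mpr ⟨Finset.mem_univ l, hc⟩
      exact absurd (S.le_max' l this) (not_le.mpr hl)
    -- partial sums: u,d antitone so psum is plain partial sum
    have hpu : ∀ k : ℕ, psum u k = ∑ i ∈ Finset.univ.filter (fun i : Fin n => (i : ℕ) < k), u i :=
      psum_of_antitone hu
    have hpd : ∀ k : ℕ, psum d k = ∑ i ∈ Finset.univ.filter (fun i : Fin n => (i : ℕ) < k), d i :=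
      psum_of_antitone hd
    -- the smallest index above j where u > d
    have hKne : (Finset.univ.filter fun l => j < l ∧ d l < u l).Nonempty := by
      by_contra hK
      rw [Finset.not_nonempty_iff_eq_empty, Finset.filter_eq_empty_iff] at hK
      have heq : ∀ l, j < l → u l = d l := by
        intro l hl
        have h1 := hj2 l hl
        have h2 : ¬(d l < u l) := fun hc => hK (Finset.mem_univ l) ⟨hl, hc⟩
        exact le_antisymm (not_lt.mp h2) h1
      have hsplu := Finset.sum_filter_add_sum_filter_not
        Finset.univ (fun i : Fin n => (i : ℕ) < (j : ℕ) + 1) u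
      have hspld := Finset.sum_filter_add_sum_filter_not
        Finset.univ (fun i : Fin n => (i : ℕ) < (j : ℕ) + 1) d
      have htail : ∑ i ∈ Finset.univ.filter (fun i : Fin n => ¬((i : ℕ) < (j : ℕ) + 1)), u i
          = ∑ i ∈ Finset.univ.filter (fun i : Fin n => ¬((i : ℕ) < (j : ℕ) + 1)), d i := by
        apply Finset.sum_congr rfl
        intro i hi
        have : (j : ℕ) < (i : ℕ) := by
          have := (Finset.mem_filter.mp hi).2; omega
        exact heq i this
      have hju := sumLt_succ u j
      have hjd := sumLt_succ d j
      have h1 := hmaj.1 (j : ℕ)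
      rw [hpu, hpd] at h1
      have h2 := hmaj.2
      linarith
    set K := Finset.univ.filter fun l => j < l ∧ d l < u l with hK
    set k := K.min' hKne with hkdef
    have hkmem : j < k ∧ d k < u k := (Finset.mem_filter.mp (K.min'_mem hKne)).2
    obtain ⟨hjk, hk1⟩ := hkmem
    have hbetween : ∀ l, j < l → l < k → u l = d l := by
      intro l h1 h2
      refine le_antisymm ?_ (hj2 l h1)
      by_contra hc
      push_neg at hc
      have : l ∈ K := Finset.mem_filter.mpr ⟨Finset.mem_univ l, h1, hc⟩
      exact absurd (K.min'_le l this) (not_le.mpr h2)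
    have hjkne : j ≠ k := ne_of_lt hjk
    -- the transfer amount
    set δ := min (d j - u j) (u k - d k) with hδ
    have hδ1 : δ ≤ d j - u j := min_le_left _ _
    have hδ2 : δ ≤ u k - d k := min_le_right _ _
    have hδpos : 0 < δ := lt_min (by linarith) (by linarith)
    have hukj : u k ≤ u j := hu (le_of_lt hjk)
    -- the new diagonal vector
    set d' := Function.update (Function.update d j (d j - δ)) k (d k + δ) with hd'
    have hd'j : d' j = d j - δ := by
      rw [hd', Function.update_of_ne hjkne, Function.update_self]
    have hd'k : d' k = d k + δ := by rw [hd', Function.update_self]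
    have hd'other : ∀ l, l ≠ j → l ≠ k → d' l = d l := by
      intro l h1 h2
      rw [hd', Function.update_of_ne h2, Function.update_of_ne h1]
    have hd'all : ∀ i, d' i = d i + ((if i = j then -δ else 0) + (if i = k then δ else 0)) := by
      intro i
      by_cases h1 : i = j
      · subst h1; rw [hd'j, if_pos rfl, if_neg hjkne]; ring
      · by_cases h2 : i = k
        · subst h2; rw [hd'k, if_neg h1, if_pos rfl]; ring
        · rw [hd'other i h1 h2, if_neg h1, if_neg h2]; ring
    -- key value inequalities
    have f1 : u j ≤ d j - δ := by linarith
    have f2 : d k + δ ≤ u k := by linarith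
    -- d' is antitone
    have hd'anti : Antitone d' := by
      intro a b hab
      by_cases hbj : b = j
      · subst hbj
        by_cases haj : a = j
        · subst haj; exact le_refl _
        · have halt : a < j := lt_of_le_of_ne hab haj
          have hak : a ≠ k := ne_of_lt (lt_trans halt hjk)
          rw [hd'other a haj hak, hd'j]
          have := hd (le_of_lt halt)
          linarith
      · by_cases hbk : b = k
        · subst hbk
          by_cases hak : a = k
          · subst hak; exact le_refl _
          · have halt : a < k := lt_of_le_of_ne hab hak
            by_cases haj : a = j
            · subst haj; rw [hd'j, hd'k]; linarith
            · rw [hd'other a haj hak, hd'k]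
              rcases lt_or_gt_of_ne haj with h | h
              · have := hd (le_of_lt h)
                linarith
              · have := hbetween a h halt
                have := hu (le_of_lt halt)
                linarith
        · rw [hd'other b hbj hbk]
          by_cases haj : a = j
          · have hjb : j < b := lt_of_le_of_ne (haj ▸ hab) (fun h => hbj h.symm)
            rw [haj, hd'j]
            rcases lt_trichotomy b k with h | h | h
            · have h5 := hbetween b hjb h
              have h6 := hu (le_of_lt hjb)
              linarith
            · exact absurd h hbk
            · have h7 := hd (le_of_lt h)
              linarith
          · by_cases hak : a = k
            · have hkb : k < b := lt_of_le_of_ne (hak ▸ hab) (fun h => hbk h.symm)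
              rw [hak, hd'k]
              have h8 := hd (le_of_lt hkb)
              linarith
            · rw [hd'other a haj hak]
              exact hd hab
    -- sums of d' equal sums of d
    have hsum' : ∑ i, d' i = ∑ i, d i := by
      simp only [hd'all]
      rw [Finset.sum_add_distrib, Finset.sum_add_distrib,
        Finset.sum_ite_eq' Finset.univ j (fun _ => -δ),
        Finset.sum_ite_eq' Finset.univ k (fun _ => δ)]
      simp
    -- partial sums of d'
    have hpart : ∀ mm : ℕ, (∑ i ∈ Finset.univ.filter (fun i : Fin n => (i : ℕ) < mm), d' i)
        = (∑ i ∈ Finset.univ.filter (fun i : Fin n => (i : ℕ) < mm), d i)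
          + ((if (j : ℕ) < mm then -δ else 0) + (if (k : ℕ) < mm then δ else 0)) := by
      intro mm
      simp only [hd'all]
      rw [Finset.sum_add_distrib, Finset.sum_add_distrib,
        Finset.sum_ite_eq' _ j (fun _ => -δ), Finset.sum_ite_eq' _ k (fun _ => δ)]
      simp only [Finset.mem_filter, Finset.mem_univ, true_and]
    -- majorization of u by d'
    have hjkn : (j : ℕ) < (k : ℕ) := hjk
    have hmaj' : Majorizes u d' := by
      constructor
      · intro mm
        rw [hpu, psum_of_antitone hd'anti, hpart mm]
        by_cases hkm : (k : ℕ) < mm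
        · have hjm : (j : ℕ) < mm := by omega
          rw [if_pos hjm, if_pos hkm]
          have := hmaj.1 mm
          rw [hpu, hpd] at this
          linarith
        · by_cases hjm : (j : ℕ) < mm
          · rw [if_pos hjm, if_neg hkm]
            -- middle case : j < mm ≤ k
            have hmk : mm ≤ (k : ℕ) := not_lt.mp hkm
            have hsplit := sumLt_split (fun i => u i - d i) (a := (j : ℕ) + 1) (b := mm) (by omega)
            have hzero : ∑ i ∈ Finset.univ.filter
                (fun i : Fin n => (j : ℕ) + 1 ≤ (i : ℕ) ∧ (i : ℕ) < mm), (u i - d i) = 0 := by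
              apply Finset.sum_eq_zero
              intro i hi
              have hi' := (Finset.mem_filter.mp hi).2
              have h1 : j < i := by
                rw [Fin.lt_iff_val_lt_val]; omega
              have h2 : i < k := by
                rw [Fin.lt_iff_val_lt_val]; omega
              rw [hbetween i h1 h2]; ring
            have hsucc := sumLt_succ (fun i => u i - d i) j
            have hmaj_j := hmaj.1 (j : ℕ)
            rw [hpu, hpd] at hmaj_j
            have e_mm : ∑ i ∈ Finset.univ.filter (fun i : Fin n => (i : ℕ) < mm),
                (u i - d i) = (∑ i ∈ Finset.univ.filter (fun i : Fin n => (i : ℕ) < mm), u i)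
                - ∑ i ∈ Finset.univ.filter (fun i : Fin n => (i : ℕ) < mm), d i :=
              Finset.sum_sub_distrib _ _
            have e_j : ∑ i ∈ Finset.univ.filter (fun i : Fin n => (i : ℕ) < (j : ℕ)),
                (u i - d i) = (∑ i ∈ Finset.univ.filter (fun i : Fin n => (i : ℕ) < (j : ℕ)), u i)
                - ∑ i ∈ Finset.univ.filter (fun i : Fin n => (i : ℕ) < (j : ℕ)), d i :=
              Finset.sum_sub_distrib _ _
            have e_j1 : ∑ i ∈ Finset.univ.filter (fun i : Fin n => (i : ℕ) < (j : ℕ) + 1),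
                (u i - d i) = (∑ i ∈ Finset.univ.filter
                  (fun i : Fin n => (i : ℕ) < (j : ℕ) + 1), u i)
                - ∑ i ∈ Finset.univ.filter (fun i : Fin n => (i : ℕ) < (j : ℕ) + 1), d i :=
              Finset.sum_sub_distrib _ _
            linarith [hsplit, hzero, hsucc, hmaj_j, e_mm, e_j, e_j1]
          · rw [if_neg hjm, if_neg hkm]
            have := hmaj.1 mm
            rw [hpu, hpd] at this
            linarith
      · rw [hmaj.2, hsum']
    -- discrepancy count decreases
    have hwmem : ∀ w, u w ≠ d w → w ∈ (Finset.univ.filter fun i => u i ≠ d i) := by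
      intro w hw; exact Finset.mem_filter.mpr ⟨Finset.mem_univ w, hw⟩
    have hcard' : (Finset.univ.filter fun i => u i ≠ d' i).card ≤ m := by
      have hkey : ∃ w, u w = d' w ∧ u w ≠ d w ∧ (w = j ∨ w = k) := by
        rcases min_cases (d j - u j) (u k - d k) with ⟨hmin, -⟩ | ⟨hmin, -⟩
        · exact ⟨j, by rw [hd'j, ← hδ] at *; rw [hmin]; ring, ne_of_lt hj1, Or.inl rfl⟩
        · exact ⟨k, by rw [hd'k, ← hδ] at *; rw [hmin]; ring, Ne.symm (ne_of_lt hk1), Or.inr rfl⟩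
      obtain ⟨w, hw1, hw2, hw3⟩ := hkey
      have hsub : (Finset.univ.filter fun i => u i ≠ d' i)
          ⊆ (Finset.univ.filter fun i => u i ≠ d i).erase w := by
        intro i hi
        have hi' := (Finset.mem_filter.mp hi).2
        have hiw : i ≠ w := by rintro rfl; exact hi' hw1
        refine Finset.mem_erase.mpr ⟨hiw, hwmem i ?_⟩
        by_cases h1 : i = j
        · subst h1; exact ne_of_lt hj1
        · by_cases h2 : i = k
          · subst h2; exact Ne.symm (ne_of_lt hk1)
          · rw [← hd'other i h1 h2]; exact hi'
      have h1 := Finset.card_le_card hsub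
      rw [Finset.card_erase_of_mem (hwmem w hw2)] at h1
      omega
    -- rotation realizing the move
    have hv : (d j - δ) ∈ Set.uIcc (d j) (d k) := by
      rw [Set.mem_uIcc]
      right
      constructor
      · linarith
      · linarith
    obtain ⟨R, hR, e1, e2, e3⟩ := rot_step A hA hjkne d hdiag (d j - δ) hv
    have hA' : (Rᴴ * A * R).IsHermitian := Matrix.isHermitian_conjTranspose_mul_mul R hA
    have hdiag' : ∀ l, (Rᴴ * A * R) l l = (d' l : ℂ) := by
      intro l
      by_cases h1 : l = j
      · subst h1; rw [e1, hd'j]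
      · by_cases h2 : l = k
        · subst h2
          rw [e2, hd'k]
          norm_num
        · rw [e3 l h1 h2, hd'other l h1 h2]
    obtain ⟨W, hW, hWdiag⟩ := ih (Rᴴ * A * R) hA' d' u hd'anti hu hdiag' hmaj' hcard'
    refine ⟨R * W, mul_mem hR hW, fun l => ?_⟩
    have : (R * W)ᴴ * A * (R * W) = Wᴴ * (Rᴴ * A * R) * W := by
      rw [Matrix.conjTranspose_mul]
      simp only [Matrix.mul_assoc]
    rw [this]
    exact hWdiag l
end mainlemmas

theorem stmt1 {n : ℕ} (G : Matrix (Fin n) (Fin n) ℂ) (u : Fin n → ℝ)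
    (hu : Majorizes u (sqSingular G)) :
    ∃ U ∈ Matrix.unitaryGroup (Fin n) ℂ, ∀ i, (Uᴴ * (Gᴴ * G) * U) i i = (u i : ℂ) := by
  have hA : (Gᴴ * G).IsHermitian := Matrix.isHermitian_conjTranspose_mul_self G
  set A := Gᴴ * G with hAdef
  set lam := sqSingular G with hlam
  -- diagonalize
  set V : Matrix (Fin n) (Fin n) ℂ := (hA.eigenvectorUnitary : Matrix (Fin n) (Fin n) ℂ) with hV
  have hVmem : V ∈ Matrix.unitaryGroup (Fin n) ℂ := (hA.eigenvectorUnitary).2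
  have hspec : Vᴴ * A * V = Matrix.diagonal (RCLike.ofReal ∘ hA.eigenvalues) := by
    rw [← Matrix.star_eq_conjTranspose]
    have h := hA.conjStarAlgAut_star_eigenvectorUnitary
    simp only [Unitary.conjStarAlgAut_apply, Unitary.coe_star, star_star] at h
    exact h
  have hDdiag : ∀ i, (Vᴴ * A * V) i i = (lam i : ℂ) := by
    intro i
    rw [hspec]
    simp only [Matrix.diagonal_apply_eq, Function.comp_apply]
    rfl
  have hDherm : (Vᴴ * A * V).IsHermitian := Matrix.isHermitian_conjTranspose_mul_mul V hA
  -- sort both vectors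
  obtain ⟨σd, hσd⟩ := exists_sortDesc_perm lam
  obtain ⟨σu, hσu⟩ := exists_sortDesc_perm u
  have hdanti : Antitone (lam ∘ σd) := by rw [hσd]; exact antitone_sortDesc lam
  have huanti : Antitone (u ∘ σu) := by rw [hσu]; exact antitone_sortDesc u
  set Pd := permM σd with hPd
  set B := Pdᴴ * (Vᴴ * A * V) * Pd with hB
  have hBherm : B.IsHermitian := Matrix.isHermitian_conjTranspose_mul_mul Pd hDherm
  have hBdiag : ∀ k, B k k = ((lam ∘ σd) k : ℂ) := by
    intro k
    rw [hB, permM_conj σd (Vᴴ * A * V) k k]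
    exact hDdiag (σd k)
  have hmajB : Majorizes (u ∘ σu) (lam ∘ σd) := majorizes_comp_perm hu σu σd
  obtain ⟨W, hWmem, hWdiag⟩ := main_ind
    ((Finset.univ.filter fun i => (u ∘ σu) i ≠ (lam ∘ σd) i).card)
    B hBherm (lam ∘ σd) (u ∘ σu) hdanti huanti hBdiag hmajB le_rfl
  set Pu := permM σu⁻¹ with hPu
  refine ⟨V * Pd * W * Pu, ?_, fun i => ?_⟩
  · exact mul_mem (mul_mem (mul_mem hVmem (permM_unitary σd)) hWmem) (permM_unitary σu⁻¹)
  · have heq : (V * Pd * W * Pu)ᴴ * A * (V * Pd * W * Pu)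
        = Puᴴ * (Wᴴ * (Pdᴴ * (Vᴴ * A * V) * Pd) * W) * Pu := by
      simp only [Matrix.conjTranspose_mul, Matrix.mul_assoc]
    rw [heq, hPu, permM_conj σu⁻¹ _ i i]
    rw [← hB]
    rw [hWdiag (σu⁻¹ i)]
    simp
end

section
/- For any n×n complex matrix G and any unitaries U, V, the absolute values of the diagonal entries of V*GU are weakly majorized by the singular values of G, and additionally (sum of the n−1 largest |diagonal entries|) minus the smallest |diagonal entry| is at most (sum of the n−1 largest singular values) minus the smallest singular value. -/
open Matrix

noncomputable section ToolsSec

variable {ι : Type*} [Fintype ι] [DecidableEq ι]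

/-- real diagonal as complex matrix -/
def cdiag (d : ι → ℝ) : Matrix ι ι ℂ := Matrix.diagonal (fun j => (d j : ℂ))

lemma conj_mul_self_re (z : ℂ) : ((starRingEnd ℂ) z * z).re = ‖z‖ ^ 2 := by
  rw [← Complex.normSq_eq_conj_mul_self, Complex.ofReal_re, Complex.sq_norm]

lemma self_mul_conj_re (z : ℂ) : (z * (starRingEnd ℂ) z).re = ‖z‖ ^ 2 := by
  rw [mul_comm, conj_mul_self_re]

lemma unitary_col_sq {P : Matrix ι ι ℂ} (hP : P ∈ Matrix.unitaryGroup ι ℂ) (j : ι) :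
    ∑ i, ‖P i j‖ ^ 2 = 1 := by
  have h : (Pᴴ * P) j j = 1 := by
    rw [show Pᴴ * P = 1 from (Matrix.mem_unitaryGroup_iff').mp hP]
    simp
  have h2 := congrArg Complex.re h
  rw [Matrix.mul_apply] at h2
  simp only [Matrix.conjTranspose_apply, Complex.one_re] at h2
  rw [← h2, Complex.re_sum]
  exact Finset.sum_congr rfl fun i _ => (conj_mul_self_re (P i j)).symm

lemma unitary_row_sq {P : Matrix ι ι ℂ} (hP : P ∈ Matrix.unitaryGroup ι ℂ) (i : ι) :
    ∑ j, ‖P i j‖ ^ 2 = 1 := by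
  have h : (P * Pᴴ) i i = 1 := by
    rw [show P * Pᴴ = 1 from (Matrix.mem_unitaryGroup_iff).mp hP]
    simp
  have h2 := congrArg Complex.re h
  rw [Matrix.mul_apply] at h2
  simp only [Matrix.conjTranspose_apply, Complex.one_re] at h2
  rw [← h2, Complex.re_sum]
  exact Finset.sum_congr rfl fun j _ => (self_mul_conj_re (P i j)).symm

lemma unitary_entry_le {P : Matrix ι ι ℂ} (hP : P ∈ Matrix.unitaryGroup ι ℂ) (i j : ι) :
    ‖P i j‖ ≤ 1 := by
  have h := unitary_col_sq hP j
  have h1 : ‖P i j‖ ^ 2 ≤ 1 := by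
    rw [← h]
    exact Finset.single_le_sum (f := fun i => ‖P i j‖ ^ 2)
      (fun k _ => sq_nonneg _) (Finset.mem_univ i)
  nlinarith [norm_nonneg (P i j)]

/-- master trace bound -/
lemma master (P Q : Matrix ι ι ℂ) (d : ι → ℝ) (hd : ∀ j, 0 ≤ d j) (X : Matrix ι ι ℂ) :
    ((P * cdiag d * Qᴴ * X).trace).re ≤ ∑ j, d j * ‖(Qᴴ * X * P) j j‖ := by
  have h1 : P * cdiag d * Qᴴ * X = P * (cdiag d * (Qᴴ * X)) := by
    simp [mul_assoc]
  have h2 : (P * cdiag d * Qᴴ * X).trace = (cdiag d * (Qᴴ * X * P)).trace := by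
    rw [h1, Matrix.trace_mul_comm]
    congr 1
    simp [mul_assoc]
  rw [h2]
  have h3 : (cdiag d * (Qᴴ * X * P)).trace = ∑ j, (d j : ℂ) * (Qᴴ * X * P) j j := by
    rw [Matrix.trace]
    refine Finset.sum_congr rfl fun j _ => ?_
    rw [Matrix.diag_apply, cdiag, Matrix.diagonal_mul]
  rw [h3, Complex.re_sum]
  refine Finset.sum_le_sum fun j _ => ?_
  calc ((d j : ℂ) * (Qᴴ * X * P) j j).re ≤ ‖(d j : ℂ) * (Qᴴ * X * P) j j‖ :=
        Complex.re_le_norm _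
    _ = d j * ‖(Qᴴ * X * P) j j‖ := by
        rw [norm_mul, Complex.norm_real, Real.norm_eq_abs, abs_of_nonneg (hd j)]


lemma svd_of_spectral (M W : Matrix ι ι ℂ) (hW : W ∈ Matrix.unitaryGroup ι ℂ) (lam : ι → ℝ)
    (hlam : ∀ j, 0 ≤ lam j) (hspec : Mᴴ * M = W * cdiag lam * Wᴴ) :
    ∃ P ∈ Matrix.unitaryGroup ι ℂ, M = P * cdiag (fun j => Real.sqrt (lam j)) * Wᴴ := by
  classical
  set N := M * W with hN
  have hWW : Wᴴ * W = 1 := (Matrix.mem_unitaryGroup_iff').mp hW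
  have hWW' : W * Wᴴ = 1 := (Matrix.mem_unitaryGroup_iff).mp hW
  have hNN : Nᴴ * N = cdiag lam := by
    rw [hN, Matrix.conjTranspose_mul]
    calc Wᴴ * Mᴴ * (M * W) = Wᴴ * (Mᴴ * M) * W := by simp [mul_assoc]
      _ = Wᴴ * (W * cdiag lam * Wᴴ) * W := by rw [hspec]
      _ = (Wᴴ * W) * cdiag lam * (Wᴴ * W) := by simp [mul_assoc]
      _ = cdiag lam := by rw [hWW]; simp
  set y : ι → EuclideanSpace ℂ ι := fun j => WithLp.toLp 2 (fun i => N i j) with hy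
  have hyy : ∀ j k, (inner ℂ (y j) (y k) : ℂ) = if j = k then (lam j : ℂ) else 0 := by
    intro j k
    rw [PiLp.inner_apply]
    have : ∀ i, (inner ℂ (y j i) (y k i) : ℂ) = (starRingEnd ℂ) (N i j) * N i k := by
      intro i; rw [RCLike.inner_apply']
    calc (∑ i, (inner ℂ (y j i) (y k i) : ℂ)) = ∑ i, (starRingEnd ℂ) (N i j) * N i k :=
          Finset.sum_congr rfl fun i _ => this i
      _ = (Nᴴ * N) j k := by rw [Matrix.mul_apply]; simp [Matrix.conjTranspose_apply]
      _ = if j = k then (lam j : ℂ) else 0 := by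
          rw [hNN, cdiag, Matrix.diagonal_apply]
  set T : Set ι := {j | lam j ≠ 0} with hT
  set v : ι → EuclideanSpace ℂ ι := fun j => (((Real.sqrt (lam j) : ℂ))⁻¹ • y j) with hv
  have hvon : Orthonormal ℂ (T.restrict v) := by
    rw [orthonormal_iff_ite]
    rintro ⟨j, hj⟩ ⟨k, hk⟩
    simp only [Set.restrict_apply, hv, Subtype.mk_eq_mk]
    show inner ℂ ((((Real.sqrt (lam j) : ℂ))⁻¹ • y j)) ((((Real.sqrt (lam k) : ℂ))⁻¹ • y k)) = _
    rw [inner_smul_left, inner_smul_right, hyy, map_inv₀, Complex.conj_ofReal]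
    by_cases hjk : j = k
    · subst hjk
      rw [if_pos rfl, if_pos rfl]
      have hpos : 0 < lam j := lt_of_le_of_ne (hlam j) (Ne.symm hj)
      have hs : Real.sqrt (lam j) ≠ 0 := Real.sqrt_ne_zero'.mpr hpos
      rw [← Complex.ofReal_inv, ← Complex.ofReal_mul, ← Complex.ofReal_mul,
        ← Complex.ofReal_one]
      congr 1
      field_simp
      rw [Real.sq_sqrt (hlam j)]
    · rw [if_neg hjk, if_neg hjk]
      simp
  have hcard : Module.finrank ℂ (EuclideanSpace ℂ ι) = Fintype.card ι := finrank_euclideanSpace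
  obtain ⟨b, hb⟩ := hvon.exists_orthonormalBasis_extension_of_card_eq hcard
  set P : Matrix ι ι ℂ := fun i j => b j i with hPdef
  have hbon := b.orthonormal
  rw [orthonormal_iff_ite] at hbon
  have hP : P ∈ Matrix.unitaryGroup ι ℂ := by
    rw [Matrix.mem_unitaryGroup_iff']
    ext j k
    rw [Matrix.mul_apply, Matrix.one_apply]
    have := hbon j k
    rw [PiLp.inner_apply] at this
    calc (∑ i, Pᴴ j i * P i k) = ∑ i, (inner ℂ (b j i) (b k i) : ℂ) := by
          refine Finset.sum_congr rfl fun i _ => ?_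
          rw [Matrix.conjTranspose_apply, RCLike.inner_apply']; rfl
      _ = if j = k then 1 else 0 := this
  refine ⟨P, hP, ?_⟩
  have hNP : N = P * cdiag (fun j => Real.sqrt (lam j)) := by
    ext i j
    rw [cdiag, Matrix.mul_diagonal]
    by_cases hj : lam j = 0
    · have h0 : (inner ℂ (y j) (y j) : ℂ) = 0 := by rw [hyy]; simp [hj]
      have hyj : y j = 0 := inner_self_eq_zero.mp h0
      have : N i j = 0 := by
        have := congrFun (congrArg (fun (z : EuclideanSpace ℂ ι) => (z : ι → ℂ)) hyj) i
        simpa [hy] using this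
      simp [this, hj]
    · have hbj : b j = v j := hb j hj
      have hPij : P i j = ((Real.sqrt (lam j) : ℂ))⁻¹ * N i j := by
        show (b j) i = _
        rw [hbj, hv]
        simp [hy]
      rw [hPij]
      have hpos : 0 < lam j := lt_of_le_of_ne (hlam j) (Ne.symm hj)
      have hsq : (Real.sqrt (lam j) : ℂ) ≠ 0 := by
        simp only [ne_eq, Complex.ofReal_eq_zero]
        exact Real.sqrt_ne_zero'.mpr hpos
      field_simp
  calc M = M * (W * Wᴴ) := by rw [hWW']; simp
    _ = N * Wᴴ := by rw [hN, mul_assoc]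
    _ = P * cdiag (fun j => Real.sqrt (lam j)) * Wᴴ := by rw [hNP]

lemma svd_exists (M : Matrix ι ι ℂ) :
    ∃ P ∈ Matrix.unitaryGroup ι ℂ, ∃ Q ∈ Matrix.unitaryGroup ι ℂ, ∃ d : ι → ℝ,
      (∀ j, 0 ≤ d j) ∧ M = P * cdiag d * Qᴴ := by
  have hH : (Mᴴ * M).IsHermitian := isHermitian_conjTranspose_mul_self M
  have hWmem : (hH.eigenvectorUnitary : Matrix ι ι ℂ) ∈ Matrix.unitaryGroup ι ℂ :=
    hH.eigenvectorUnitary.2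
  have hdiag : cdiag hH.eigenvalues = Matrix.diagonal (RCLike.ofReal ∘ hH.eigenvalues) := rfl
  have hspec : Mᴴ * M = (hH.eigenvectorUnitary : Matrix ι ι ℂ) * cdiag hH.eigenvalues *
      (hH.eigenvectorUnitary : Matrix ι ι ℂ)ᴴ := by
    rw [hdiag]
    exact hH.spectral_theorem
  obtain ⟨P, hP, hM⟩ := svd_of_spectral M _ hWmem _
    (fun j => Matrix.eigenvalues_conjTranspose_mul_self_nonneg M j) hspec
  exact ⟨P, hP, _, hWmem, _, fun j => Real.sqrt_nonneg _, hM⟩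

lemma sum_le_card_sub_one_add_prod {α : Type*} (s : Finset α) (f : α → ℝ)
    (h0 : ∀ a ∈ s, 0 ≤ f a) (h1 : ∀ a ∈ s, f a ≤ 1) :
    ∑ a ∈ s, f a ≤ (s.card : ℝ) - 1 + ∏ a ∈ s, f a := by
  classical
  induction s using Finset.induction_on with
  | empty => simp
  | @insert a s hx ih =>
    have h0' : ∀ b ∈ s, 0 ≤ f b := fun b hb => h0 b (Finset.mem_insert_of_mem hb)
    have h1' : ∀ b ∈ s, f b ≤ 1 := fun b hb => h1 b (Finset.mem_insert_of_mem hb)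
    have ha0 : 0 ≤ f a := h0 a (Finset.mem_insert_self a s)
    have ha1 : f a ≤ 1 := h1 a (Finset.mem_insert_self a s)
    have hprod0 : 0 ≤ ∏ b ∈ s, f b := Finset.prod_nonneg h0'
    have hprod1 : ∏ b ∈ s, f b ≤ 1 := Finset.prod_le_one h0' h1'
    rw [Finset.sum_insert hx, Finset.prod_insert hx, Finset.card_insert_of_notMem hx]
    have := ih h0' h1'
    have key : f a + ((s.card : ℝ) - 1 + ∏ b ∈ s, f b) ≤ (s.card : ℝ) + 1 - 1 + f a * ∏ b ∈ s, f b := by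
      nlinarith
    push_cast
    nlinarith

lemma mulVec_norm_sq {R : Matrix ι ι ℂ} (hR : R ∈ Matrix.unitaryGroup ι ℂ) (q : ι → ℂ) :
    ∑ i, ‖(R *ᵥ q) i‖ ^ 2 = ∑ k, ‖q k‖ ^ 2 := by
  have hRR : Rᴴ * R = 1 := (Matrix.mem_unitaryGroup_iff').mp hR
  have key : (star (R *ᵥ q)) ⬝ᵥ (R *ᵥ q) = (star q) ⬝ᵥ q := by
    rw [Matrix.star_mulVec, Matrix.dotProduct_mulVec, Matrix.vecMul_vecMul, hRR,
      Matrix.vecMul_one]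
  have h1 := congrArg Complex.re key
  rw [dotProduct, dotProduct, Complex.re_sum, Complex.re_sum] at h1
  simp only [Pi.star_apply] at h1
  calc ∑ i, ‖(R *ᵥ q) i‖ ^ 2
      = ∑ i, ((starRingEnd ℂ) ((R *ᵥ q) i) * (R *ᵥ q) i).re :=
        Finset.sum_congr rfl fun i _ => (conj_mul_self_re _).symm
    _ = ∑ k, ((starRingEnd ℂ) (q k) * q k).re := h1
    _ = ∑ k, ‖q k‖ ^ 2 :=
        Finset.sum_congr rfl fun k _ => conj_mul_self_re _

lemma sum_subtype_ne {M : Type*} [AddCommMonoid M] (m : ι) (f : ι → M) :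
    ∑ i : {i : ι // i ≠ m}, f i.val = ∑ i ∈ Finset.univ.erase m, f i := by
  classical
  exact (Finset.sum_subtype (p := fun i => i ≠ m) (Finset.univ.erase m)
    (fun x => by simp) f).symm

lemma compress_trace_bound (m : ι) {R : Matrix ι ι ℂ} (hR : R ∈ Matrix.unitaryGroup ι ℂ) :
    (∑ i ∈ Finset.univ.erase m, R i i).re ≤
      (Fintype.card {i : ι // i ≠ m} : ℝ) - 1 + ‖R m m‖ := by
  classical
  set R' : Matrix {i : ι // i ≠ m} {i : ι // i ≠ m} ℂ :=
    Matrix.of (fun i j => R i.val j.val) with hR'def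
  obtain ⟨P₁, hP₁, Q₁, hQ₁, d₁, hd₁, hdec⟩ := svd_exists R'
  have hQ₁Q₁ : Q₁ᴴ * Q₁ = 1 := (Matrix.mem_unitaryGroup_iff').mp hQ₁
  have hQP : Q₁ᴴ * P₁ ∈ Matrix.unitaryGroup {i : ι // i ≠ m} ℂ :=
    mul_mem (Unitary.star_mem hQ₁) hP₁
  -- trace of submatrix
  have htr_eq : R'.trace = ∑ i ∈ Finset.univ.erase m, R i i := by
    rw [Matrix.trace]
    exact sum_subtype_ne m (fun i => R i i)
  -- step 1 : Re trace ≤ ∑ d₁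
  have htr1 : (R'.trace).re ≤ ∑ j, d₁ j := by
    have h := master P₁ Q₁ d₁ hd₁ 1
    rw [← hdec] at h
    simp only [mul_one] at h
    refine h.trans (Finset.sum_le_sum fun j _ => ?_)
    have h1 : ‖(Q₁ᴴ * P₁) j j‖ ≤ 1 := unitary_entry_le hQP j j
    nlinarith [hd₁ j, norm_nonneg ((Q₁ᴴ * P₁) j j)]
  -- step 2 : each d₁ j ≤ 1
  have hRQ : R' * Q₁ = P₁ * cdiag d₁ := by
    rw [hdec, mul_assoc, mul_assoc, hQ₁Q₁, mul_one]
  have hd1le : ∀ j, d₁ j ≤ 1 := by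
    intro j
    set q : ι → ℂ := fun k => if h : k = m then 0 else Q₁ ⟨k, h⟩ j with hq
    have hq_val : ∀ i : {i : ι // i ≠ m}, q i.val = Q₁ i j := by
      intro i
      rw [hq]
      simp only [dif_neg i.prop]
    have hq_m : q m = 0 := by rw [hq]; simp
    have hq_sum : ∑ k, ‖q k‖ ^ 2 = 1 := by
      have hsplit : ∑ k, ‖q k‖ ^ 2 =
          ‖q m‖ ^ 2 + ∑ k ∈ Finset.univ.erase m, ‖q k‖ ^ 2 :=
        (Finset.add_sum_erase _ _ (Finset.mem_univ m)).symm
      rw [hsplit, hq_m]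
      have : ∑ k ∈ Finset.univ.erase m, ‖q k‖ ^ 2 =
          ∑ k : {i : ι // i ≠ m}, ‖Q₁ k j‖ ^ 2 := by
        rw [← sum_subtype_ne m (fun k => ‖q k‖ ^ 2)]
        exact Finset.sum_congr rfl fun i _ => by rw [hq_val i]
      rw [this, unitary_col_sq hQ₁ j]
      simp
    have hmv : ∀ i : {i : ι // i ≠ m}, (R' * Q₁) i j = (R *ᵥ q) i.val := by
      intro i
      rw [Matrix.mul_apply, Matrix.mulVec]
      show _ = ∑ k, R i.val k * q k
      have hsplit : ∑ k, R i.val k * q k =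
          R i.val m * q m + ∑ k ∈ Finset.univ.erase m, R i.val k * q k :=
        (Finset.add_sum_erase _ _ (Finset.mem_univ m)).symm
      rw [hsplit, hq_m, mul_zero, zero_add,
        ← sum_subtype_ne m (fun k => R i.val k * q k)]
      exact Finset.sum_congr rfl fun k _ => by rw [hq_val k]; rfl
    have hcolsum : ∑ i : {i : ι // i ≠ m}, ‖(R' * Q₁) i j‖ ^ 2 = d₁ j ^ 2 := by
      have : ∀ i : {i : ι // i ≠ m}, ‖(R' * Q₁) i j‖ ^ 2 =
          ‖P₁ i j‖ ^ 2 * d₁ j ^ 2 := by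
        intro i
        rw [hRQ, cdiag, Matrix.mul_diagonal, norm_mul, Complex.norm_real, Real.norm_eq_abs,
          abs_of_nonneg (hd₁ j), mul_pow]
      rw [Finset.sum_congr rfl fun i _ => this i, ← Finset.sum_mul, unitary_col_sq hP₁ j,
        one_mul]
    have hle : d₁ j ^ 2 ≤ 1 := by
      rw [← hcolsum, ← hq_sum]
      calc ∑ i : {i : ι // i ≠ m}, ‖(R' * Q₁) i j‖ ^ 2
          = ∑ i ∈ Finset.univ.erase m, ‖(R *ᵥ q) i‖ ^ 2 := by
            rw [← sum_subtype_ne m (fun i => ‖(R *ᵥ q) i‖ ^ 2)]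
            exact Finset.sum_congr rfl fun i _ => by rw [hmv i]
        _ ≤ ∑ i, ‖(R *ᵥ q) i‖ ^ 2 :=
            Finset.sum_le_sum_of_subset_of_nonneg (Finset.erase_subset m Finset.univ)
              (fun i _ _ => sq_nonneg _)
        _ = ∑ k, ‖q k‖ ^ 2 := mulVec_norm_sq hR q
    nlinarith [hd₁ j]
  -- step 3 : product of d₁ equals |R m m|
  have hprod : ∏ j, d₁ j = ‖R m m‖ := by
    -- outer product identity
    set u : {i : ι // i ≠ m} → ℂ := fun j => R m j.val with hu
    have hc : ∀ j k : {i : ι // i ≠ m},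
        ((1 + Matrix.replicateCol Unit (star u) * Matrix.replicateRow Unit (-u)) :
          Matrix {i : ι // i ≠ m} {i : ι // i ≠ m} ℂ) j k =
          (if j.val = k.val then 1 else 0) - (starRingEnd ℂ) (u j) * u k := by
      intro j k
      rw [Matrix.add_apply, Matrix.one_apply, Matrix.mul_apply]
      simp only [Matrix.replicateCol_apply, Matrix.replicateRow_apply, Pi.star_apply, Pi.neg_apply,
        Finset.univ_unique, Finset.sum_singleton, Complex.star_def]
      have hite : (if j = k then (1:ℂ) else 0) = (if j.val = k.val then 1 else 0) := by
        simp [Subtype.ext_iff]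
      rw [hite]
      ring
    have houter : R'ᴴ * R' = 1 + Matrix.replicateCol Unit (star u) * Matrix.replicateRow Unit (-u) := by
      ext j k
      rw [Matrix.mul_apply, hc j k]
      have hfull : ∑ i, (starRingEnd ℂ) (R i j.val) * R i k.val = if j.val = k.val then 1 else 0 := by
        have h1 : (Rᴴ * R) j.val k.val = (1 : Matrix ι ι ℂ) j.val k.val := by
          rw [show Rᴴ * R = 1 from (Matrix.mem_unitaryGroup_iff').mp hR]
        rw [Matrix.mul_apply] at h1
        simp only [Matrix.conjTranspose_apply] at h1
        rw [Matrix.one_apply] at h1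
        exact h1
      have hsplit : ∑ i, (starRingEnd ℂ) (R i j.val) * R i k.val =
          (starRingEnd ℂ) (R m j.val) * R m k.val +
            ∑ i ∈ Finset.univ.erase m, (starRingEnd ℂ) (R i j.val) * R i k.val :=
        (Finset.add_sum_erase _ _ (Finset.mem_univ m)).symm
      have hsub : ∑ i : {i : ι // i ≠ m}, (starRingEnd ℂ) (R i.val j.val) * R i.val k.val =
          ∑ i ∈ Finset.univ.erase m, (starRingEnd ℂ) (R i j.val) * R i k.val :=
        sum_subtype_ne m (fun i => (starRingEnd ℂ) (R i j.val) * R i k.val)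
      rw [hsplit] at hfull
      calc ∑ i, R'ᴴ j i * R' i k
          = ∑ i : {i : ι // i ≠ m}, (starRingEnd ℂ) (R i.val j.val) * R i.val k.val := by
            refine Finset.sum_congr rfl fun i _ => ?_
            rw [Matrix.conjTranspose_apply]
            rfl
        _ = (if j.val = k.val then 1 else 0) - (starRingEnd ℂ) (u j) * u k := by
            rw [hsub]
            rw [hu]
            linear_combination hfull
    have hdet_outer : (R'ᴴ * R').det = 1 - ∑ k : {i : ι // i ≠ m}, (starRingEnd ℂ) (u k) * u k := by
      rw [houter, Matrix.det_one_add_replicateCol_mul_replicateRow, dotProduct]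
      simp only [Pi.neg_apply, Pi.star_apply, neg_mul, Complex.star_def]
      rw [Finset.sum_neg_distrib, sub_eq_add_neg]
      congr 2
      exact Finset.sum_congr rfl fun x _ => mul_comm _ _
    have hQQ' : Q₁ * Q₁ᴴ = 1 := (Matrix.mem_unitaryGroup_iff).mp hQ₁
    have hPP : P₁ᴴ * P₁ = 1 := (Matrix.mem_unitaryGroup_iff').mp hP₁
    have hdet2 : (R'ᴴ * R').det = ((starRingEnd ℂ) R'.det) * R'.det := by
      rw [Matrix.det_mul, Matrix.det_conjTranspose, Complex.star_def]
    have hdetR' : R'.det = P₁.det * (((∏ j, d₁ j : ℝ)) : ℂ) * Q₁ᴴ.det := by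
      rw [hdec, Matrix.det_mul, Matrix.det_mul, cdiag, Matrix.det_diagonal]
      push_cast
      ring
    have hPdet : (starRingEnd ℂ) P₁.det * P₁.det = 1 := by
      have h1 : P₁ᴴ.det * P₁.det = 1 := by
        rw [← Matrix.det_mul, hPP, Matrix.det_one]
      rw [Matrix.det_conjTranspose, Complex.star_def] at h1
      exact h1
    have hQdet : (starRingEnd ℂ) Q₁ᴴ.det * Q₁ᴴ.det = 1 := by
      have h1 : Q₁.det * Q₁ᴴ.det = 1 := by
        rw [← Matrix.det_mul, hQQ', Matrix.det_one]
      have h2 : (starRingEnd ℂ) Q₁ᴴ.det = Q₁.det := by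
        rw [Matrix.det_conjTranspose, Complex.star_def, Complex.conj_conj]
      rw [h2]; exact h1
    have hzz : (starRingEnd ℂ) R'.det * R'.det = ((((∏ j, d₁ j)^2 : ℝ)) : ℂ) := by
      have hsplit : (starRingEnd ℂ) (P₁.det * (((∏ j, d₁ j : ℝ)) : ℂ) * Q₁ᴴ.det) *
          (P₁.det * (((∏ j, d₁ j : ℝ)) : ℂ) * Q₁ᴴ.det)
          = ((starRingEnd ℂ) P₁.det * P₁.det) * ((starRingEnd ℂ) Q₁ᴴ.det * Q₁ᴴ.det) *
            ((((∏ j, d₁ j : ℝ)) : ℂ) * (((∏ j, d₁ j : ℝ)) : ℂ)) := by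
        rw [_root_.map_mul, _root_.map_mul, Complex.conj_ofReal]
        ring
      rw [hdetR', hsplit, hPdet, hQdet, one_mul, one_mul]
      push_cast
      ring
    have hrow : ∑ k, R m k * (starRingEnd ℂ) (R m k) = 1 := by
      have h1 : (R * Rᴴ) m m = (1 : Matrix ι ι ℂ) m m := by
        rw [show R * Rᴴ = 1 from (Matrix.mem_unitaryGroup_iff).mp hR]
      rw [Matrix.mul_apply] at h1
      simp only [Matrix.conjTranspose_apply, Matrix.one_apply_eq] at h1
      exact h1
    have hsum_u : ∑ k : {i : ι // i ≠ m}, (starRingEnd ℂ) (u k) * u k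
        = 1 - (starRingEnd ℂ) (R m m) * R m m := by
      have hsub := sum_subtype_ne m (fun k => (starRingEnd ℂ) (R m k) * R m k)
      have hsplit : ∑ k, (starRingEnd ℂ) (R m k) * R m k =
          (starRingEnd ℂ) (R m m) * R m m +
            ∑ k ∈ Finset.univ.erase m, (starRingEnd ℂ) (R m k) * R m k :=
        (Finset.add_sum_erase _ _ (Finset.mem_univ m)).symm
      have hrow' : ∑ k, (starRingEnd ℂ) (R m k) * R m k = 1 := by
        rw [← hrow]; exact Finset.sum_congr rfl fun k _ => mul_comm _ _
      rw [hsplit] at hrow'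
      calc ∑ k : {i : ι // i ≠ m}, (starRingEnd ℂ) (u k) * u k
          = ∑ k ∈ Finset.univ.erase m, (starRingEnd ℂ) (R m k) * R m k := hsub
        _ = 1 - (starRingEnd ℂ) (R m m) * R m m := by linear_combination hrow'
    have habs : (starRingEnd ℂ) (R m m) * R m m = (((‖R m m‖)^2 : ℝ) : ℂ) := by
      rw [← Complex.normSq_eq_conj_mul_self, Complex.sq_norm]
    have hcast : ((((∏ j, d₁ j)^2 : ℝ)) : ℂ) = (((‖R m m‖)^2 : ℝ) : ℂ) := by
      rw [← hzz, ← hdet2, hdet_outer, hsum_u, habs]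
      ring
    have hreal : (∏ j, d₁ j)^2 = (‖R m m‖)^2 := by
      exact_mod_cast hcast
    have hprodnn : 0 ≤ ∏ j, d₁ j := Finset.prod_nonneg fun j _ => hd₁ j
    calc ∏ j, d₁ j = Real.sqrt ((∏ j, d₁ j)^2) := (Real.sqrt_sq hprodnn).symm
      _ = Real.sqrt ((‖R m m‖)^2) := by rw [hreal]
      _ = ‖R m m‖ := Real.sqrt_sq (norm_nonneg _)
  rw [← htr_eq]
  calc (R'.trace).re ≤ ∑ j, d₁ j := htr1
    _ ≤ (Finset.univ.card : ℝ) - 1 + ∏ j, d₁ j :=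
        sum_le_card_sub_one_add_prod Finset.univ d₁ (fun a _ => hd₁ a) (fun a _ => hd1le a)
    _ = (Fintype.card {i : ι // i ≠ m} : ℝ) - 1 + ‖R m m‖ := by
        rw [hprod, Finset.card_univ]

lemma retrace_le_of_dec {M P Q : Matrix ι ι ℂ} {d : ι → ℝ}
    (hP : P ∈ Matrix.unitaryGroup ι ℂ) (hQ : Q ∈ Matrix.unitaryGroup ι ℂ)
    (hd : ∀ j, 0 ≤ d j) (hdec : M = P * cdiag d * Qᴴ) :
    (M.trace).re ≤ ∑ j, d j := by
  have h := master P Q d hd 1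
  rw [← hdec] at h
  simp only [mul_one] at h
  have hQP : Qᴴ * P ∈ Matrix.unitaryGroup ι ℂ := mul_mem (Unitary.star_mem hQ) hP
  refine h.trans (Finset.sum_le_sum fun j _ => ?_)
  have h1 : ‖(Qᴴ * P) j j‖ ≤ 1 := unitary_entry_le hQP j j
  nlinarith [hd j, norm_nonneg ((Qᴴ * P) j j)]

lemma pinch_bound (m : ι) {Y Pc Qc : Matrix ι ι ℂ} (hPc : Pc ∈ Matrix.unitaryGroup ι ℂ)
    (hQc : Qc ∈ Matrix.unitaryGroup ι ℂ) {g : ι → ℝ} (hg : ∀ j, 0 ≤ g j)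
    (hYdec : Y = Pc * cdiag g * Qcᴴ) :
    (∑ i ∈ Finset.univ.erase m, Y i i).re ≤ (∑ j, g j) - ‖Y m m‖ := by
  classical
  set Y' : Matrix {i : ι // i ≠ m} {i : ι // i ≠ m} ℂ :=
    Matrix.of (fun i j => Y i.val j.val) with hY'def
  obtain ⟨P₁, hP₁, Q₁, hQ₁, d₁, hd₁, hdec⟩ := svd_exists Y'
  have hPP₁ : P₁ᴴ * P₁ = 1 := (Matrix.mem_unitaryGroup_iff').mp hP₁
  have hQQ₁ : Q₁ᴴ * Q₁ = 1 := (Matrix.mem_unitaryGroup_iff').mp hQ₁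
  have htr_eq : Y'.trace = ∑ i ∈ Finset.univ.erase m, Y i i := by
    rw [Matrix.trace]
    exact sum_subtype_ne m (fun i => Y i i)
  have htr1 : (Y'.trace).re ≤ ∑ j, d₁ j := retrace_le_of_dec hP₁ hQ₁ hd₁ hdec
  set W' : Matrix {i : ι // i ≠ m} {i : ι // i ≠ m} ℂ := Q₁ * P₁ᴴ with hW'def
  have hW' : W' ∈ Matrix.unitaryGroup {i : ι // i ≠ m} ℂ :=
    mul_mem hQ₁ (Unitary.star_mem hP₁)
  have hWW' : W'ᴴ * W' = 1 := (Matrix.mem_unitaryGroup_iff').mp hW'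
  have htrYW : (Y' * W').trace = (((∑ j, d₁ j : ℝ)) : ℂ) := by
    have h1 : Y' * W' = P₁ * cdiag d₁ * P₁ᴴ := by
      rw [hdec, hW'def]
      calc P₁ * cdiag d₁ * Q₁ᴴ * (Q₁ * P₁ᴴ) = P₁ * cdiag d₁ * (Q₁ᴴ * Q₁) * P₁ᴴ := by
            simp [mul_assoc]
        _ = P₁ * cdiag d₁ * P₁ᴴ := by rw [hQQ₁, mul_one]
    rw [h1, Matrix.trace_mul_cycle, hPP₁, one_mul]
    rw [cdiag, Matrix.trace_diagonal]
    push_cast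
    ring
  -- phase
  set ω : ℂ := if Y m m = 0 then 1 else (starRingEnd ℂ) (Y m m) / (‖Y m m‖ : ℂ)
    with hω
  have hωY : ω * Y m m = ((‖Y m m‖ : ℝ) : ℂ) := by
    by_cases h0 : Y m m = 0
    · rw [hω, if_pos h0, h0]
      simp
    · rw [hω, if_neg h0]
      have habs0 : (‖Y m m‖ : ℂ) ≠ 0 := by
        simp only [ne_eq, Complex.ofReal_eq_zero]
        exact fun h => h0 (norm_eq_zero.mp h)
      field_simp
      rw [← Complex.normSq_eq_conj_mul_self, Complex.normSq_eq_norm_sq]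
      push_cast
      ring
  have hωabs : ‖ω‖ = 1 := by
    by_cases h0 : Y m m = 0
    · rw [hω, if_pos h0]; simp
    · rw [hω, if_neg h0]
      rw [norm_div, Complex.norm_conj, Complex.norm_real, Real.norm_eq_abs,
        abs_of_nonneg (norm_nonneg _), div_self]
      exact fun h => h0 (norm_eq_zero.mp h)
  -- the embedded unitary
  set Xh : Matrix ι ι ℂ := Matrix.of (fun k i =>
    if hk : k = m then (if i = m then ω else 0)
    else if hi : i = m then 0 else W' ⟨k, hk⟩ ⟨i, hi⟩) with hXh
  have hXh_mm : Xh m m = ω := by rw [hXh]; simp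
  have hXh_col : ∀ k, k ≠ m → Xh k m = 0 := by
    intro k hk; rw [hXh]; simp [hk]
  have hXh_row : ∀ i, i ≠ m → Xh m i = 0 := by
    intro i hi; rw [hXh]; simp [hi]
  have hXh_sub : ∀ (k i : ι) (hk : k ≠ m) (hi : i ≠ m), Xh k i = W' ⟨k, hk⟩ ⟨i, hi⟩ := by
    intro k i hk hi; rw [hXh]; simp [hk, hi]
  have hXhU : Xh ∈ Matrix.unitaryGroup ι ℂ := by
    rw [Matrix.mem_unitaryGroup_iff']
    ext j k
    rw [Matrix.mul_apply, Matrix.one_apply]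
    have hstar : ∀ a b : ι, (star Xh) a b = (starRingEnd ℂ) (Xh b a) := fun a b => rfl
    by_cases hj : j = m <;> by_cases hk : k = m
    · rw [hj, hk]
      have hsplit : ∑ i, (star Xh) m i * Xh i m =
          (star Xh) m m * Xh m m + ∑ i ∈ Finset.univ.erase m, (star Xh) m i * Xh i m :=
        (Finset.add_sum_erase _ _ (Finset.mem_univ m)).symm
      rw [hsplit, Finset.sum_eq_zero (fun i hi => by
        rw [hXh_col i (Finset.mem_erase.mp hi).1, mul_zero]), add_zero, if_pos rfl,
        hstar, hXh_mm, ← Complex.normSq_eq_conj_mul_self, Complex.normSq_eq_norm_sq, hωabs]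
      norm_num
    · rw [hj, if_neg (fun h => hk h.symm)]
      refine Finset.sum_eq_zero fun i _ => ?_
      by_cases him : i = m
      · rw [him, hXh_row k hk, mul_zero]
      · rw [hstar, hXh_col i him, map_zero, zero_mul]
    · rw [hk, if_neg hj]
      refine Finset.sum_eq_zero fun i _ => ?_
      by_cases him : i = m
      · rw [him, hstar, hXh_row j hj, map_zero, zero_mul]
      · rw [hXh_col i him, mul_zero]
    · have hsplit : ∑ i, (star Xh) j i * Xh i k =
          (star Xh) j m * Xh m k + ∑ i ∈ Finset.univ.erase m, (star Xh) j i * Xh i k :=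
        (Finset.add_sum_erase _ _ (Finset.mem_univ m)).symm
      rw [hsplit]
      have h0 : (star Xh) j m * Xh m k = 0 := by
        rw [hstar, hXh_row j hj, map_zero, zero_mul]
      rw [h0, zero_add, ← sum_subtype_ne m (fun i => (star Xh) j i * Xh i k)]
      have h2 : ∀ i : {i : ι // i ≠ m},
          (star Xh) j i.val * Xh i.val k = (starRingEnd ℂ) (W' i ⟨j, hj⟩) * W' i ⟨k, hk⟩ := by
        intro i
        rw [hstar, hXh_sub i.val j i.prop hj, hXh_sub i.val k i.prop hk]
      rw [Finset.sum_congr rfl fun i _ => h2 i]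
      have h3 : (W'ᴴ * W') ⟨j, hj⟩ ⟨k, hk⟩ =
          (1 : Matrix {i : ι // i ≠ m} {i : ι // i ≠ m} ℂ) ⟨j, hj⟩ ⟨k, hk⟩ := by
        rw [hWW']
      rw [Matrix.mul_apply] at h3
      simp only [Matrix.conjTranspose_apply] at h3
      rw [Matrix.one_apply] at h3
      simp only [Complex.star_def] at h3
      rw [h3]
      simp [Subtype.ext_iff]
  -- trace of Y * Xh
  have htrYX : (Y * Xh).trace = ω * Y m m + (Y' * W').trace := by
    rw [Matrix.trace]
    have hsplit : ∑ i, (Y * Xh).diag i = (Y * Xh) m m + ∑ i ∈ Finset.univ.erase m, (Y * Xh) i i :=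
      (Finset.add_sum_erase _ _ (Finset.mem_univ m)).symm
    rw [hsplit]
    congr 1
    · rw [Matrix.mul_apply]
      have hsplit2 : ∑ k, Y m k * Xh k m = Y m m * Xh m m +
          ∑ k ∈ Finset.univ.erase m, Y m k * Xh k m :=
        (Finset.add_sum_erase _ _ (Finset.mem_univ m)).symm
      rw [hsplit2, hXh_mm]
      have h1 : ∀ k ∈ Finset.univ.erase m, Y m k * Xh k m = 0 := by
        intro k hk
        rw [hXh_col k (Finset.mem_erase.mp hk).1, mul_zero]
      rw [Finset.sum_eq_zero h1, add_zero, mul_comm]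
    · rw [Matrix.trace, ← sum_subtype_ne m (fun i => (Y * Xh) i i)]
      refine Finset.sum_congr rfl fun i _ => ?_
      rw [Matrix.mul_apply, Matrix.diag_apply, Matrix.mul_apply]
      have hsplit3 : ∑ k, Y i.val k * Xh k i.val = Y i.val m * Xh m i.val +
          ∑ k ∈ Finset.univ.erase m, Y i.val k * Xh k i.val :=
        (Finset.add_sum_erase _ _ (Finset.mem_univ m)).symm
      rw [hsplit3, hXh_row i.val i.prop, mul_zero, zero_add,
        ← sum_subtype_ne m (fun k => Y i.val k * Xh k i.val)]
      refine Finset.sum_congr rfl fun k _ => ?_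
      rw [hXh_sub k.val i.val k.prop i.prop]
      rfl
  -- master bound on Y with Xh
  have hmaster : ((Y * Xh).trace).re ≤ ∑ j, g j := by
    have h := master Pc Qc g hg Xh
    rw [← hYdec] at h
    refine h.trans (Finset.sum_le_sum fun j _ => ?_)
    have hmem : Qcᴴ * Xh * Pc ∈ Matrix.unitaryGroup ι ℂ :=
      mul_mem (mul_mem (Unitary.star_mem hQc) hXhU) hPc
    have h1 : ‖(Qcᴴ * Xh * Pc) j j‖ ≤ 1 := unitary_entry_le hmem j j
    nlinarith [hg j, norm_nonneg ((Qcᴴ * Xh * Pc) j j)]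
  -- combine
  have hkey : ‖Y m m‖ + ∑ j, d₁ j ≤ ∑ j, g j := by
    have h1 : ((Y * Xh).trace).re = ‖Y m m‖ + ∑ j, d₁ j := by
      rw [htrYX, Complex.add_re, hωY, htrYW]
      simp
    rw [← h1]
    exact hmaster
  rw [← htr_eq]
  have : (Y'.trace).re ≤ (∑ j, g j) - ‖Y m m‖ := by
    have := htr1
    linarith
  exact this

end ToolsSec

section FinSec

variable {n : ℕ}

noncomputable def dperm (x : Fin n → ℝ) : Equiv.Perm (Fin n) := Fin.revPerm.trans (Tuple.sort x)

lemma sortDesc_eq (x : Fin n → ℝ) (i : Fin n) : sortDesc x i = x (dperm x i) := rfl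

lemma sortDesc_anti (x : Fin n → ℝ) {i j : Fin n} (hij : i ≤ j) :
    sortDesc x j ≤ sortDesc x i :=
  Tuple.monotone_sort x (Fin.rev_le_rev.mpr hij)

lemma sum_sortDesc (x : Fin n → ℝ) : ∑ i, sortDesc x i = ∑ i, x i :=
  Equiv.sum_comp (dperm x) x

lemma card_filter_lt_le (k : ℕ) :
    (Finset.univ.filter (fun i : Fin n => (i : ℕ) < k)).card ≤ k := by
  have h := Finset.card_le_card_of_injOn (s := Finset.univ.filter (fun i : Fin n => (i : ℕ) < k))
    (t := Finset.range k) (fun i : Fin n => (i : ℕ))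
    (fun i hi => Finset.mem_range.mpr (Finset.mem_filter.mp hi).2)
    (fun a _ b _ h => Fin.val_injective h)
  simpa using h

lemma psum_of_le {x : Fin n → ℝ} {k : ℕ} (hk : n ≤ k) : psum x k = ∑ i, x i := by
  rw [psum, Finset.filter_true_of_mem (fun i _ => lt_of_lt_of_le i.isLt hk), sum_sortDesc]

/-- rearrangement-type bound -/
lemma rl_bound (d c : Fin n → ℝ) (hd0 : ∀ j, 0 ≤ d j) (hc0 : ∀ j, 0 ≤ c j)
    (hc1 : ∀ j, c j ≤ 1) (k : ℕ) (hck : ∑ j, c j ≤ k) :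
    ∑ j, d j * c j ≤ psum d k := by
  classical
  set e := dperm d with he
  have hsum : ∑ j, d j * c j = ∑ j, sortDesc d j * c (e j) := by
    rw [← Equiv.sum_comp e (fun j => d j * c j)]
    exact Finset.sum_congr rfl fun j _ => by rw [sortDesc_eq]
  rw [hsum]
  by_cases hk : k < n
  · set s := Finset.univ.filter (fun i : Fin n => (i : ℕ) < k) with hs
    have hpsum : psum d k = ∑ i ∈ s, sortDesc d i := rfl
    set τ := sortDesc d ⟨k, hk⟩ with hτ
    have hτ0 : 0 ≤ τ := by
      rw [hτ, sortDesc_eq]; exact hd0 _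
    have hcards : s.card = k := by
      rw [hs]
      have hIio : Finset.univ.filter (fun i : Fin n => (i : ℕ) < k) =
          Finset.Iio (⟨k, hk⟩ : Fin n) := by
        ext i
        simp [Finset.mem_Iio, Fin.lt_def]
      rw [hIio, Fin.card_Iio]
    have h1 : ∑ j ∈ s, sortDesc d j * c (e j) ≤
        (∑ j ∈ s, sortDesc d j) + τ * ((∑ j ∈ s, c (e j)) - s.card) := by
      have hstep : ∀ j ∈ s, sortDesc d j * c (e j) ≤ sortDesc d j + τ * (c (e j) - 1) := by
        intro j hj
        have hjk : (j : ℕ) < k := (Finset.mem_filter.mp hj).2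
        have hDj : τ ≤ sortDesc d j := sortDesc_anti d (by
          rw [Fin.le_def]
          exact le_of_lt hjk)
        nlinarith [hc0 (e j), hc1 (e j)]
      calc ∑ j ∈ s, sortDesc d j * c (e j) ≤ ∑ j ∈ s, (sortDesc d j + τ * (c (e j) - 1)) :=
            Finset.sum_le_sum hstep
        _ = (∑ j ∈ s, sortDesc d j) + τ * ((∑ j ∈ s, c (e j)) - s.card) := by
            rw [Finset.sum_add_distrib, ← Finset.mul_sum, Finset.sum_sub_distrib]
            simp [mul_comm]
    have h2 : ∑ j ∈ sᶜ, sortDesc d j * c (e j) ≤ τ * ∑ j ∈ sᶜ, c (e j) := by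
      rw [Finset.mul_sum]
      refine Finset.sum_le_sum fun j hj => ?_
      have hjk : ¬ (j : ℕ) < k := by
        intro hcon
        exact (Finset.mem_compl.mp hj) (Finset.mem_filter.mpr ⟨Finset.mem_univ j, hcon⟩)
      have hDj : sortDesc d j ≤ τ := sortDesc_anti d (by
        rw [Fin.le_def]
        exact le_of_not_gt hjk)
      have hD0 : 0 ≤ sortDesc d j := by rw [sortDesc_eq]; exact hd0 _
      nlinarith [hc0 (e j)]
    have hcc : (∑ j ∈ s, c (e j)) + ∑ j ∈ sᶜ, c (e j) ≤ k := by
      rw [Finset.sum_add_sum_compl s (fun j => c (e j)), Equiv.sum_comp e c]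
      exact hck
    have htot : ∑ j, sortDesc d j * c (e j) =
        ∑ j ∈ s, sortDesc d j * c (e j) + ∑ j ∈ sᶜ, sortDesc d j * c (e j) :=
      (Finset.sum_add_sum_compl s _).symm
    have hckR : (s.card : ℝ) = (k : ℝ) := by rw [hcards]
    rw [htot, hpsum]
    nlinarith [h1, h2, hcc, hτ0, hckR]
  · push_neg at hk
    rw [psum_of_le hk, ← sum_sortDesc d]
    refine Finset.sum_le_sum fun j _ => ?_
    have hD0 : 0 ≤ sortDesc d j := by rw [sortDesc_eq]; exact hd0 _
    nlinarith [hc1 (e j), hc0 (e j)]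

end FinSec

theorem stmt4 {n : ℕ} (hn : 0 < n) (G U V : Matrix (Fin n) (Fin n) ℂ)
    (hU : U ∈ Matrix.unitaryGroup (Fin n) ℂ) (hV : V ∈ Matrix.unitaryGroup (Fin n) ℂ) :
    WeakMajorizes (fun i => ‖(Vᴴ * G * U) i i‖) (singular G) ∧
    psum (fun i => ‖(Vᴴ * G * U) i i‖) (n - 1) -
        sortDesc (fun i => ‖(Vᴴ * G * U) i i‖) ⟨n - 1, by omega⟩ ≤
      psum (singular G) (n - 1) - sortDesc (singular G) ⟨n - 1, by omega⟩ := by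
  classical
  set A := Vᴴ * G * U with hA
  set x : Fin n → ℝ := fun i => ‖A i i‖ with hx
  have hx0 : ∀ i, 0 ≤ x i := fun i => norm_nonneg _
  have hG : (Gᴴ * G).IsHermitian := Matrix.isHermitian_conjTranspose_mul_self G
  set lam : Fin n → ℝ := sqSingular G with hlam_def
  have hlam0 : ∀ j, 0 ≤ lam j := fun j => Matrix.eigenvalues_conjTranspose_mul_self_nonneg G j
  set W : Matrix (Fin n) (Fin n) ℂ := (hG.eigenvectorUnitary : Matrix (Fin n) (Fin n) ℂ)
    with hWdef
  have hWmem : W ∈ Matrix.unitaryGroup (Fin n) ℂ := hG.eigenvectorUnitary.2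
  have hGspec : Gᴴ * G = W * cdiag lam * Wᴴ := by
    rw [show cdiag lam = Matrix.diagonal (RCLike.ofReal ∘ hG.eigenvalues) from rfl]
    exact hG.spectral_theorem
  set Q : Matrix (Fin n) (Fin n) ℂ := Uᴴ * W with hQdef
  have hQmem : Q ∈ Matrix.unitaryGroup (Fin n) ℂ := mul_mem (Unitary.star_mem hU) hWmem
  have hVV : V * Vᴴ = 1 := (Matrix.mem_unitaryGroup_iff).mp hV
  have hAspec : Aᴴ * A = Q * cdiag lam * Qᴴ := by
    rw [hA, hQdef]
    calc (Vᴴ * G * U)ᴴ * (Vᴴ * G * U)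
        = Uᴴ * Gᴴ * (V * Vᴴ) * G * U := by
          rw [Matrix.conjTranspose_mul, Matrix.conjTranspose_mul,
            Matrix.conjTranspose_conjTranspose]
          simp only [mul_assoc]
      _ = Uᴴ * (Gᴴ * G) * U := by rw [hVV]; simp only [mul_assoc, one_mul, mul_one]
      _ = Uᴴ * (W * cdiag lam * Wᴴ) * U := by rw [hGspec]
      _ = (Uᴴ * W) * cdiag lam * (Uᴴ * W)ᴴ := by
          rw [Matrix.conjTranspose_mul, Matrix.conjTranspose_conjTranspose]
          simp only [mul_assoc]
  obtain ⟨P, hPmem, hAdec⟩ := svd_of_spectral A Q hQmem lam hlam0 hAspec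
  set σ : Fin n → ℝ := singular G with hσdef
  have hσ0 : ∀ j, 0 ≤ σ j := fun j => Real.sqrt_nonneg _
  have hAdec' : A = P * cdiag σ * Qᴴ := hAdec
  have hentry : ∀ i j, A i j = ∑ l, P i l * (σ l : ℂ) * (starRingEnd ℂ) (Q j l) := by
    intro i j
    rw [hAdec', Matrix.mul_apply]
    refine Finset.sum_congr rfl fun l _ => ?_
    rw [Matrix.conjTranspose_apply, cdiag, Matrix.mul_diagonal]
    rfl
  have habsentry : ∀ i, x i ≤ ∑ l, σ l * (‖P i l‖ * ‖Q i l‖) := by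
    intro i
    rw [hx]
    show ‖A i i‖ ≤ _
    rw [hentry i i]
    refine (norm_sum_le _ _).trans ?_
    refine le_of_eq (Finset.sum_congr rfl fun l _ => ?_)
    rw [norm_mul, norm_mul, Complex.norm_real, Real.norm_eq_abs, Complex.norm_conj,
      abs_of_nonneg (hσ0 l)]
    ring
  -- key subset bound
  have key : ∀ (S : Finset (Fin n)) (k : ℕ), S.card ≤ k → ∑ i ∈ S, x i ≤ psum σ k := by
    intro S k hSk
    set c : Fin n → ℝ := fun l => ∑ i ∈ S, ‖P i l‖ * ‖Q i l‖ with hc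
    have hc0 : ∀ l, 0 ≤ c l := fun l => Finset.sum_nonneg fun i _ =>
      mul_nonneg (norm_nonneg _) (norm_nonneg _)
    have hc1 : ∀ l, c l ≤ 1 := by
      intro l
      have hcs := Finset.sum_mul_sq_le_sq_mul_sq S (fun i => ‖P i l‖)
        (fun i => ‖Q i l‖)
      have hP2 : ∑ i ∈ S, ‖P i l‖ ^ 2 ≤ 1 := by
        rw [← unitary_col_sq hPmem l]
        exact Finset.sum_le_sum_of_subset_of_nonneg (Finset.subset_univ S)
          (fun i _ _ => sq_nonneg _)
      have hQ2 : ∑ i ∈ S, ‖Q i l‖ ^ 2 ≤ 1 := by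
        rw [← unitary_col_sq hQmem l]
        exact Finset.sum_le_sum_of_subset_of_nonneg (Finset.subset_univ S)
          (fun i _ _ => sq_nonneg _)
      have hP2' : (0:ℝ) ≤ ∑ i ∈ S, ‖P i l‖ ^ 2 :=
        Finset.sum_nonneg fun i _ => sq_nonneg _
      nlinarith [hc0 l]
    have hrow : ∀ i, ∑ l, ‖P i l‖ * ‖Q i l‖ ≤ 1 := by
      intro i
      have hcs := Finset.sum_mul_sq_le_sq_mul_sq Finset.univ (fun l => ‖P i l‖)
        (fun l => ‖Q i l‖)
      have h1 := unitary_row_sq hPmem i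
      have h2 := unitary_row_sq hQmem i
      have hnn : (0:ℝ) ≤ ∑ l, ‖P i l‖ * ‖Q i l‖ :=
        Finset.sum_nonneg fun l _ => mul_nonneg (norm_nonneg _)
          (norm_nonneg _)
      nlinarith
    have hck : ∑ l, c l ≤ (k : ℝ) := by
      calc ∑ l, c l = ∑ i ∈ S, ∑ l, ‖P i l‖ * ‖Q i l‖ := by
            rw [hc]; exact Finset.sum_comm
        _ ≤ ∑ _i ∈ S, (1:ℝ) := Finset.sum_le_sum fun i _ => hrow i
        _ = S.card := by simp
        _ ≤ (k : ℝ) := by exact_mod_cast hSk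
    have hxc : ∑ i ∈ S, x i ≤ ∑ l, σ l * c l := by
      calc ∑ i ∈ S, x i ≤ ∑ i ∈ S, ∑ l, σ l * (‖P i l‖ * ‖Q i l‖) :=
            Finset.sum_le_sum fun i _ => habsentry i
        _ = ∑ l, σ l * c l := by
            rw [Finset.sum_comm]
            exact Finset.sum_congr rfl fun l _ => by rw [hc, Finset.mul_sum]
    exact hxc.trans (rl_bound σ c hσ0 hc0 hc1 k hck)
  constructor
  · -- weak majorization
    intro k
    set S : Finset (Fin n) :=
      (Finset.univ.filter (fun i : Fin n => (i : ℕ) < k)).image (dperm x) with hS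
    have hpsum : psum x k = ∑ i ∈ S, x i := by
      rw [hS, psum, Finset.sum_image (fun a _ b _ h => (dperm x).injective h)]
      exact Finset.sum_congr rfl fun i _ => sortDesc_eq x i
    have hcard : S.card ≤ k := by
      rw [hS, Finset.card_image_of_injective _ (dperm x).injective]
      exact card_filter_lt_le k
    rw [hpsum]
    exact key S k hcard
  · -- the extra Thompson inequality
    set last : Fin n := ⟨n - 1, by omega⟩ with hlast
    set m : Fin n := dperm x last with hm
    set s : ℝ := sortDesc σ last with hsd
    have hs0 : 0 ≤ s := by rw [hsd, sortDesc_eq]; exact hσ0 _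
    have hle_last : ∀ j : Fin n, j ≤ last := by
      intro j
      have := j.isLt
      rw [Fin.le_def]
      show (j : ℕ) ≤ n - 1
      omega
    have hsmin : ∀ l, s ≤ σ l := by
      intro l
      have h1 : sortDesc σ ((dperm σ).symm l) = σ l := by
        rw [sortDesc_eq, Equiv.apply_symm_apply]
      rw [← h1, hsd]
      exact sortDesc_anti σ (hle_last _)
    have hfilter : Finset.univ.filter (fun i : Fin n => (i : ℕ) < n - 1) =
        Finset.univ.erase last := by
      ext i
      simp only [Finset.mem_filter, Finset.mem_univ, true_and, Finset.mem_erase, and_true]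
      have hiv := i.isLt
      constructor
      · intro h hcon
        rw [Fin.ext_iff] at hcon
        simp only [hlast] at hcon
        omega
      · intro hne
        have : (i : ℕ) ≠ n - 1 := by
          intro hcon
          exact hne (Fin.ext (by simpa [hlast] using hcon))
        omega
    have hpsum_x : psum x (n-1) = (∑ i, x i) - x m := by
      rw [psum, hfilter]
      have h1 := Finset.add_sum_erase Finset.univ (sortDesc x) (Finset.mem_univ last)
      have h2 : sortDesc x last = x m := by rw [sortDesc_eq, hm]
      have h3 := sum_sortDesc x
      linarith
    have hpsum_σ : psum σ (n-1) = (∑ l, σ l) - s := by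
      rw [psum, hfilter]
      have h1 := Finset.add_sum_erase Finset.univ (sortDesc σ) (Finset.mem_univ last)
      have h3 := sum_sortDesc σ
      rw [hsd]
      linarith
    -- phase diagonal
    set ζ : Fin n → ℂ := fun i =>
      if A i i = 0 then 1 else (starRingEnd ℂ) (A i i) / (‖A i i‖ : ℂ) with hζ
    have hζabs : ∀ i, ‖ζ i‖ = 1 := by
      intro i
      rw [hζ]
      by_cases h0 : A i i = 0
      · simp [h0]
      · simp only [if_neg h0]
        rw [norm_div, Complex.norm_conj, Complex.norm_real, Real.norm_eq_abs,
          abs_of_nonneg (norm_nonneg _), div_self]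
        exact fun h => h0 (norm_eq_zero.mp h)
    set Dζ : Matrix (Fin n) (Fin n) ℂ := Matrix.diagonal ζ with hDζ
    have hDmem : Dζ ∈ Matrix.unitaryGroup (Fin n) ℂ := by
      rw [Matrix.mem_unitaryGroup_iff']
      show Dζᴴ * Dζ = 1
      rw [hDζ, Matrix.diagonal_conjTranspose, Matrix.diagonal_mul_diagonal]
      ext i j
      rw [Matrix.diagonal_apply, Matrix.one_apply]
      by_cases hij : i = j
      · rw [if_pos hij, if_pos hij]
        simp only [Pi.mul_apply, Pi.star_apply, Complex.star_def]
        rw [← Complex.normSq_eq_conj_mul_self, Complex.normSq_eq_norm_sq, hζabs]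
        norm_num
      · rw [if_neg hij, if_neg hij]
    set B := A * Dζ with hB
    have hBdiag : ∀ i, B i i = ((x i : ℝ) : ℂ) := by
      intro i
      rw [hB, hDζ, Matrix.mul_diagonal]
      show A i i * ζ i = _
      simp only [hζ, hx]
      by_cases h0 : A i i = 0
      · simp [h0]
      · rw [if_neg h0]
        have habs0 : ((‖A i i‖ : ℝ) : ℂ) ≠ 0 := by
          simp only [ne_eq, Complex.ofReal_eq_zero]
          exact fun h => h0 (norm_eq_zero.mp h)
        field_simp
        rw [Complex.mul_conj, Complex.normSq_eq_norm_sq]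
        push_cast
        ring
    set Q₂ := Dζᴴ * Q with hQ₂
    have hQ₂mem : Q₂ ∈ Matrix.unitaryGroup (Fin n) ℂ :=
      mul_mem (Unitary.star_mem hDmem) hQmem
    have hQ₂H : Q₂ᴴ = Qᴴ * Dζ := by
      conv_lhs => rw [hQ₂]
      rw [Matrix.conjTranspose_mul, Matrix.conjTranspose_conjTranspose]
    have hBdec : B = P * cdiag σ * Q₂ᴴ := by
      rw [hQ₂H, hB, hAdec']
      simp only [mul_assoc]
    set R := P * Q₂ᴴ with hR
    have hRmem : R ∈ Matrix.unitaryGroup (Fin n) ℂ :=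
      mul_mem hPmem (Unitary.star_mem hQ₂mem)
    set g : Fin n → ℝ := fun j => σ j - s with hgdef
    have hg0 : ∀ j, 0 ≤ g j := by
      intro j
      rw [hgdef]
      simp only [sub_nonneg]
      exact hsmin j
    set Y := P * cdiag g * Q₂ᴴ with hY
    have hsplitD : cdiag σ = (s:ℂ) • (1 : Matrix (Fin n) (Fin n) ℂ) + cdiag g := by
      ext i j
      rw [Matrix.add_apply, Matrix.smul_apply, Matrix.one_apply, cdiag, cdiag,
        Matrix.diagonal_apply, Matrix.diagonal_apply]
      by_cases hij : i = j
      · rw [if_pos hij, if_pos hij, if_pos hij, hgdef]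
        push_cast
        simp only [smul_eq_mul, mul_one]
        ring
      · rw [if_neg hij, if_neg hij, if_neg hij]
        simp
    have hBRY : B = (s:ℂ) • R + Y := by
      rw [hBdec, hsplitD, Matrix.mul_add, Matrix.add_mul, hY, hR]
      congr 1
      rw [Matrix.mul_smul, Matrix.smul_mul, mul_one]
    have hRe1 : ∑ i ∈ Finset.univ.erase m, x i = (∑ i ∈ Finset.univ.erase m, B i i).re := by
      rw [Complex.re_sum]
      exact (Finset.sum_congr rfl fun i _ => by rw [hBdiag i, Complex.ofReal_re]).symm
    have hBentry : ∀ i j', B i j' = (s:ℂ) * R i j' + Y i j' := by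
      intro i j'
      rw [hBRY, Matrix.add_apply, Matrix.smul_apply, smul_eq_mul]
    have hRe2 : (∑ i ∈ Finset.univ.erase m, B i i).re =
        s * (∑ i ∈ Finset.univ.erase m, R i i).re + (∑ i ∈ Finset.univ.erase m, Y i i).re := by
      rw [Finset.sum_congr rfl fun i _ => hBentry i i, Finset.sum_add_distrib, Complex.add_re,
        ← Finset.mul_sum, Complex.re_ofReal_mul]
    have hcard' : (Fintype.card {i : Fin n // i ≠ m} : ℝ) = (n : ℝ) - 1 := by
      have h1 : Fintype.card {i : Fin n // i ≠ m} = n - 1 := by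
        have h2 := Fintype.card_subtype_compl (fun i : Fin n => i = m)
        rw [Fintype.card_subtype_eq, Fintype.card_fin] at h2
        exact h2
      rw [h1]
      have : (1:ℕ) ≤ n := hn
      push_cast [Nat.cast_sub this]
      ring
    have hγ := compress_trace_bound m hRmem
    have hδ := pinch_bound m hPmem hQ₂mem hg0 hY
    have hγ' := mul_le_mul_of_nonneg_left hγ hs0
    have htri : s * ‖R m m‖ - ‖Y m m‖ ≤ x m := by
      have h1 : (s:ℂ) * R m m = B m m - Y m m := by rw [hBentry m m]; ring
      have h2 : ‖(s:ℂ) * R m m‖ = s * ‖R m m‖ := by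
        rw [norm_mul, Complex.norm_real, Real.norm_eq_abs, abs_of_nonneg hs0]
      have h3 : ‖B m m - Y m m‖ ≤ ‖B m m‖ + ‖Y m m‖ :=
        norm_sub_le _ _
      have h4 : ‖B m m‖ = x m := by
        rw [hBdiag m, Complex.norm_real, Real.norm_eq_abs, abs_of_nonneg (hx0 m)]
      have h5 : s * ‖R m m‖ ≤ x m + ‖Y m m‖ := by
        calc s * ‖R m m‖ = ‖(s:ℂ) * R m m‖ := h2.symm
          _ = ‖B m m - Y m m‖ := by rw [h1]
          _ ≤ ‖B m m‖ + ‖Y m m‖ := h3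
          _ = x m + ‖Y m m‖ := by rw [h4]
      linarith
    have hgsum : ∑ j, g j = (∑ j, σ j) - n * s := by
      have : ∀ j, g j = σ j - s := fun j => by rw [hgdef]
      rw [Finset.sum_congr rfl fun j _ => this j, Finset.sum_sub_distrib]
      simp [Finset.card_univ, mul_comm]
    have herase_x : ∑ i ∈ Finset.univ.erase m, x i = (∑ i, x i) - x m := by
      have h1 := Finset.add_sum_erase Finset.univ x (Finset.mem_univ m)
      linarith
    have hRabs : ‖R m m‖ ≤ 1 := unitary_entry_le hRmem m m
    -- the crux inequality
    have hcrux : (∑ i, x i) - 2 * x m ≤ (∑ l, σ l) - 2 * s := by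
      have hchain : (∑ i, x i) - x m ≤
          s * ((Fintype.card {i : Fin n // i ≠ m} : ℝ) - 1 + ‖R m m‖) +
            ((∑ j, g j) - ‖Y m m‖) := by
        rw [← herase_x, hRe1, hRe2]
        have := hγ'
        linarith [hδ]
      rw [hcard', hgsum] at hchain
      have hn1 : (1:ℝ) ≤ (n:ℝ) := by exact_mod_cast hn
      nlinarith [htri]
    rw [hpsum_x, hpsum_σ]
    have hsx : sortDesc x ⟨n - 1, by omega⟩ = x m := by
      rw [show (⟨n - 1, by omega⟩ : Fin n) = last from rfl, sortDesc_eq, hm]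
    rw [hsx]
    linarith [hcrux]
end
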